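/- arXiv:1210.0725 — 8 statements merged into one kernel-verified Lean document; each statement's English description precedes it below -/
import Mathlib

section
/- Let (μ_n) be a sequence of Borel probability measures on ℝ, let (a_n) be a sequence of positive reals with a_n → ∞, let σ² > 0, and set I(x) = x²/(2σ²). Assume that for every x ≥ 0, lim_{n→∞} (1/a_n) log μ_n([x,∞)) = −I(x), and for every x ≤ 0, lim_{n→∞} (1/a_n) log μ_n((−∞,x]) = −I(x). Then for every nonempty closed set C ⊆ ℝ, limsup_{n→∞} (1/a_n) log μ_n(C) ≤ −inf_{x∈C} I(x). -/
/-!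
Split `C` into `C ∩ (-∞, 0]` and `C ∩ [0, ∞)`. A closed subset of `[0, ∞)` is either empty
(its rate `(1/a_n) log μ_n(·)` is then `⊥`) or contained in `[p, ∞)` for its least element
`p ∈ C`, so its rate has limsup at most `-I p`; symmetrically on the left. Since
`μ (A ∪ B) ≤ 2 max (μ A) (μ B)` and `(log 2) / a_n → 0`, the rate of a union has limsup at most
the larger of the two limsups.
-/

open MeasureTheory Filter Set Topology

noncomputable def scaledLogMeasure {α : Type*} [MeasurableSpace α] (μ : ℕ → Measure α)
    (a : ℕ → ℝ) (S : Set α) (n : ℕ) : EReal :=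
  (((a n)⁻¹ : ℝ) : EReal) * ENNReal.log (μ n S)

namespace scaledLogMeasure

variable {α : Type*} [MeasurableSpace α] {μ : ℕ → Measure α} {a : ℕ → ℝ} {S T : Set α} {n : ℕ}

lemma mono (han : 0 ≤ a n) (h : S ⊆ T) : scaledLogMeasure μ a S n ≤ scaledLogMeasure μ a T n :=
  mul_le_mul_of_nonneg_left (ENNReal.log_monotone (measure_mono h))
    (EReal.coe_nonneg.2 (inv_nonneg.2 han))

lemma empty (han : 0 < a n) : scaledLogMeasure μ a ∅ n = ⊥ := by
  simp [scaledLogMeasure, EReal.coe_mul_bot_of_pos (inv_pos.2 han)]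

lemma union_le (han : 0 ≤ a n) :
    scaledLogMeasure μ a (S ∪ T) n ≤
      (((a n)⁻¹ * Real.log 2 : ℝ) : EReal) +
        max (scaledLogMeasure μ a S n) (scaledLogMeasure μ a T n) := by
  have hr : (0 : EReal) ≤ (((a n)⁻¹ : ℝ) : EReal) := EReal.coe_nonneg.2 (inv_nonneg.2 han)
  have hμ : μ n (S ∪ T) ≤ 2 * max (μ n S) (μ n T) :=
    calc μ n (S ∪ T) ≤ μ n S + μ n T := measure_union_le S T
      _ ≤ max (μ n S) (μ n T) + max (μ n S) (μ n T) :=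
          add_le_add (le_max_left _ _) (le_max_right _ _)
      _ = 2 * max (μ n S) (μ n T) := (two_mul _).symm
  have hlog2 : ENNReal.log 2 = ((Real.log 2 : ℝ) : EReal) := by
    simpa using ENNReal.log_ofReal_of_pos two_pos
  calc scaledLogMeasure μ a (S ∪ T) n
      ≤ (((a n)⁻¹ : ℝ) : EReal) *
          (ENNReal.log 2 + max (ENNReal.log (μ n S)) (ENNReal.log (μ n T))) := by
        rw [← ENNReal.log_monotone.map_max, ← ENNReal.log_mul_add]
        exact mul_le_mul_of_nonneg_left (ENNReal.log_monotone hμ) hr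
    _ = _ := by
        rw [EReal.left_distrib_of_nonneg_of_ne_top hr (EReal.coe_ne_top _), hlog2, ← EReal.coe_mul,
          (monotone_mul_left_of_nonneg hr).map_max]
        rfl

lemma limsup_mono (ha : Tendsto a atTop atTop) (h : S ⊆ T) :
    limsup (scaledLogMeasure μ a S) atTop ≤ limsup (scaledLogMeasure μ a T) atTop :=
  limsup_le_limsup ((ha.eventually_ge_atTop 0).mono fun _ han => mono han h)

lemma limsup_empty (ha : Tendsto a atTop atTop) : limsup (scaledLogMeasure μ a ∅) atTop = ⊥ := by
  rw [limsup_congr ((ha.eventually_gt_atTop 0).mono fun _ han => empty han), limsup_const_bot]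

lemma limsup_union_le (ha : Tendsto a atTop atTop) :
    limsup (scaledLogMeasure μ a (S ∪ T)) atTop ≤
      max (limsup (scaledLogMeasure μ a S) atTop) (limsup (scaledLogMeasure μ a T) atTop) := by
  have hc : Tendsto (fun n => (((a n)⁻¹ * Real.log 2 : ℝ) : EReal)) atTop (𝓝 0) := by
    simpa using EReal.tendsto_coe.2 (ha.inv_tendsto_atTop.mul_const (Real.log 2))
  calc limsup (scaledLogMeasure μ a (S ∪ T)) atTop
      ≤ limsup ((fun n => (((a n)⁻¹ * Real.log 2 : ℝ) : EReal)) +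
          fun n => max (scaledLogMeasure μ a S n) (scaledLogMeasure μ a T n)) atTop :=
        limsup_le_limsup ((ha.eventually_ge_atTop 0).mono fun _ han => union_le han)
    _ ≤ limsup (fun n => (((a n)⁻¹ * Real.log 2 : ℝ) : EReal)) atTop +
          limsup (fun n => max (scaledLogMeasure μ a S n) (scaledLogMeasure μ a T n)) atTop :=
        EReal.limsup_add_le (.inl (by rw [hc.limsup_eq]; simp)) (.inl (by rw [hc.limsup_eq]; simp))
    _ = _ := by rw [hc.limsup_eq, zero_add, limsup_max]

variable {μ : ℕ → Measure ℝ} {L : ℝ → EReal} {C : Set ℝ}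

lemma limsup_inter_Ici_le (ha : Tendsto a atTop atTop) (c : ℝ)
    (hL : ∀ x, c ≤ x → Tendsto (scaledLogMeasure μ a (Ici x)) atTop (𝓝 (L x)))
    (hC : IsClosed C) :
    limsup (scaledLogMeasure μ a (C ∩ Ici c)) atTop ≤ ⨆ x ∈ C, L x := by
  rcases (C ∩ Ici c).eq_empty_or_nonempty with hempty | hne
  · rw [hempty, limsup_empty ha]
    exact bot_le
  have hbdd : BddBelow (C ∩ Ici c) := ⟨c, fun _ hx => hx.2⟩
  have hmin := (hC.inter isClosed_Ici).csInf_mem hne hbdd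
  calc limsup (scaledLogMeasure μ a (C ∩ Ici c)) atTop
      ≤ limsup (scaledLogMeasure μ a (Ici (sInf (C ∩ Ici c)))) atTop :=
        limsup_mono ha fun _ hx => csInf_le hbdd hx
    _ = L (sInf (C ∩ Ici c)) := (hL _ hmin.2).limsup_eq
    _ ≤ ⨆ x ∈ C, L x := le_iSup₂ (f := fun x _ => L x) _ hmin.1

lemma limsup_inter_Iic_le (ha : Tendsto a atTop atTop) (c : ℝ)
    (hL : ∀ x, x ≤ c → Tendsto (scaledLogMeasure μ a (Iic x)) atTop (𝓝 (L x)))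
    (hC : IsClosed C) :
    limsup (scaledLogMeasure μ a (C ∩ Iic c)) atTop ≤ ⨆ x ∈ C, L x := by
  rcases (C ∩ Iic c).eq_empty_or_nonempty with hempty | hne
  · rw [hempty, limsup_empty ha]
    exact bot_le
  have hbdd : BddAbove (C ∩ Iic c) := ⟨c, fun _ hx => hx.2⟩
  have hmax := (hC.inter isClosed_Iic).csSup_mem hne hbdd
  calc limsup (scaledLogMeasure μ a (C ∩ Iic c)) atTop
      ≤ limsup (scaledLogMeasure μ a (Iic (sSup (C ∩ Iic c)))) atTop :=
        limsup_mono ha fun _ hx => le_csSup hbdd hx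
    _ = L (sSup (C ∩ Iic c)) := (hL _ hmax.2).limsup_eq
    _ ≤ ⨆ x ∈ C, L x := le_iSup₂ (f := fun x _ => L x) _ hmax.1

end scaledLogMeasure

theorem stmt3_general (μ : ℕ → Measure ℝ) (a : ℕ → ℝ) (ha' : Tendsto a atTop atTop) (I : ℝ → ℝ)
    (hupper : ∀ x : ℝ, 0 ≤ x →
      Tendsto (fun n => (((a n)⁻¹ : ℝ) : EReal) * ENNReal.log (μ n (Set.Ici x)))
        atTop (nhds ((-(I x) : ℝ) : EReal)))
    (hlower : ∀ x : ℝ, x ≤ 0 →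
      Tendsto (fun n => (((a n)⁻¹ : ℝ) : EReal) * ENNReal.log (μ n (Set.Iic x)))
        atTop (nhds ((-(I x) : ℝ) : EReal))) :
    ∀ C : Set ℝ, C.Nonempty → IsClosed C →
      limsup (fun n => (((a n)⁻¹ : ℝ) : EReal) * ENNReal.log (μ n C)) atTop
        ≤ -(⨅ x ∈ C, (I x : EReal)) := by
  intro C _ hC
  have hsplit : C ⊆ (C ∩ Iic 0) ∪ (C ∩ Ici 0) := fun x hx =>
    (le_total x 0).imp (fun h => ⟨hx, h⟩) (fun h => ⟨hx, h⟩)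
  calc limsup (scaledLogMeasure μ a C) atTop
      ≤ limsup (scaledLogMeasure μ a ((C ∩ Iic 0) ∪ (C ∩ Ici 0))) atTop :=
        scaledLogMeasure.limsup_mono ha' hsplit
    _ ≤ _ := scaledLogMeasure.limsup_union_le ha'
    _ ≤ ⨆ x ∈ C, ((-(I x) : ℝ) : EReal) :=
        max_le (scaledLogMeasure.limsup_inter_Iic_le ha' 0 hlower hC)
          (scaledLogMeasure.limsup_inter_Ici_le ha' 0 hupper hC)
    _ ≤ -(⨅ x ∈ C, (I x : EReal)) := iSup₂_le fun x hx => by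
        rw [EReal.coe_neg]
        exact EReal.neg_le_neg_iff.2 (iInf₂_le x hx)

/-- If the half-line probabilities of `μ_n` satisfy
`(1/a_n) log μ_n [x, ∞) → −x²/(2σ²)` for `x ≥ 0` and
`(1/a_n) log μ_n (−∞, x] → −x²/(2σ²)` for `x ≤ 0`, with `a_n → ∞` positive and `σ² > 0`,
then the LDP upper bound `limsup (1/a_n) log μ_n C ≤ −inf_C I` holds for every nonempty
closed `C ⊆ ℝ`, where `I x = x²/(2σ²)`. Logarithms are `ENNReal.log` (valued in `EReal`)
and the infimum is taken in `EReal`. -/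
theorem stmt3 (μ : ℕ → Measure ℝ) [∀ n, IsProbabilityMeasure (μ n)]
    (a : ℕ → ℝ) (ha : ∀ n, 0 < a n) (ha' : Tendsto a atTop atTop)
    (σ2 : ℝ) (hσ2 : 0 < σ2) (I : ℝ → ℝ) (hI : I = fun x => x ^ 2 / (2 * σ2))
    (hupper : ∀ x : ℝ, 0 ≤ x →
      Tendsto (fun n => (((a n)⁻¹ : ℝ) : EReal) * ENNReal.log (μ n (Set.Ici x)))
        atTop (nhds ((-(I x) : ℝ) : EReal)))
    (hlower : ∀ x : ℝ, x ≤ 0 →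
      Tendsto (fun n => (((a n)⁻¹ : ℝ) : EReal) * ENNReal.log (μ n (Set.Iic x)))
        atTop (nhds ((-(I x) : ℝ) : EReal))) :
    ∀ C : Set ℝ, C.Nonempty → IsClosed C →
      limsup (fun n => (((a n)⁻¹ : ℝ) : EReal) * ENNReal.log (μ n C)) atTop
        ≤ -(⨅ x ∈ C, (I x : EReal)) :=
  stmt3_general μ a ha' I hupper hlower
end

section
/- Let (μ_n) be a sequence of Borel probability measures on ℝ, let (a_n) be a sequence of positive reals with a_n → ∞, let σ² > 0, and set I(x) = x²/(2σ²). Assume that for every x ≥ 0, lim_{n→∞} (1/a_n) log μ_n([x,∞)) = −I(x), and for every x ≤ 0, lim_{n→∞} (1/a_n) log μ_n((−∞,x]) = −I(x). Then for every x ∈ ℝ and every ε > 0, liminf_{n→∞} (1/a_n) log μ_n((x−ε, x+ε)) ≥ −inf_{y∈(x−ε,x+ε)} I(y). -/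
/-!
For `y ≥ 0` in the ball choose `z ∈ (y, x + ε)`. Then `[y, ∞) ⊆ (x - ε, x + ε) ∪ [z, ∞)`, and
since `I y < I z` the tail `[z, ∞)` is exponentially negligible against `[y, ∞)`, so the ball
alone must carry the rate `-I y` (principle of the largest term; `μ(A ∪ B) ≤ 2 max (μ A) (μ B)`).
The case `y < 0` is symmetric, with `(-∞, y]`.
-/

open MeasureTheory Filter Set Topology
open scoped ENNReal

theorem ENNReal.log_add_le_log_two_add_max (u t : ℝ≥0∞) :
    ENNReal.log (u + t) ≤ (Real.log 2 : EReal) + max (ENNReal.log u) (ENNReal.log t) := by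
  rw [← ENNReal.log_ofReal_of_pos two_pos, ENNReal.ofReal_ofNat, ← log_monotone.map_max,
    ← log_mul_add]
  exact log_monotone (by rw [two_mul]; exact add_le_add le_sup_left le_sup_right)

theorem EReal.coe_mul_log_add_le {c : ℝ} (hc : 0 ≤ c) (u t : ℝ≥0∞) :
    (c : EReal) * ENNReal.log (u + t)
      ≤ ((c * Real.log 2 : ℝ) : EReal) + max (c * ENNReal.log u) (c * ENNReal.log t) := by
  have hc' : (0 : EReal) ≤ c := EReal.coe_nonneg.2 hc
  calc (c : EReal) * ENNReal.log (u + t)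
      ≤ c * ((Real.log 2 : EReal) + max (ENNReal.log u) (ENNReal.log t)) :=
        mul_le_mul_of_nonneg_left (ENNReal.log_add_le_log_two_add_max u t) hc'
    _ = ((c * Real.log 2 : ℝ) : EReal) + max (c * ENNReal.log u) (c * ENNReal.log t) := by
        rw [EReal.left_distrib_of_nonneg_of_ne_top hc' (EReal.coe_ne_top c), EReal.coe_mul,
          (monotone_mul_left_of_nonneg hc').map_max]

theorem EReal.le_liminf_of_le_add_max {f g h : ℕ → EReal} {d : ℕ → ℝ} {α β : EReal}
    (hfgh : ∀ᶠ n in atTop, f n ≤ d n + max (g n) (h n)) (hd : Tendsto d atTop (𝓝 0))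
    (hf : Tendsto f atTop (𝓝 α)) (hh : Tendsto h atTop (𝓝 β)) (hβα : β < α) :
    α ≤ liminf g atTop := by
  have hfd : Tendsto (fun n => f n + ((-d n : ℝ) : EReal)) atTop (𝓝 α) := by
    have hd' : Tendsto (fun n => ((-d n : ℝ) : EReal)) atTop (𝓝 0) := by
      simpa using EReal.tendsto_coe.2 hd.neg
    simpa [Function.comp_def] using
      (EReal.continuousAt_add (p := (α, 0)) (by simp) (by simp)).tendsto.comp (hf.prodMk_nhds hd')
  rw [← hfd.liminf_eq]
  refine liminf_le_liminf ?_
  filter_upwards [hfgh, hh.eventually_lt hfd hβα] with n hle hlt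
  have hmax : f n + ((-d n : ℝ) : EReal) ≤ max (g n) (h n) := by
    calc f n + ((-d n : ℝ) : EReal) ≤ d n + max (g n) (h n) + ((-d n : ℝ) : EReal) :=
          add_le_add_left hle _
      _ = max (g n) (h n) := by
          rw [add_comm, ← add_assoc, ← EReal.coe_add, neg_add_cancel, EReal.coe_zero, zero_add]
  exact (le_max_iff.1 hmax).resolve_right hlt.not_ge

section Rate

variable {c : ℕ → ℝ} (hc : ∀ᶠ n in atTop, 0 ≤ c n) (hc0 : Tendsto c atTop (𝓝 0))
include hc hc0

theorem le_liminf_mul_log_of_le_add {s u t : ℕ → ℝ≥0∞} (hsut : ∀ n, s n ≤ u n + t n)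
    {α β : EReal} (hs : Tendsto (fun n => (c n : EReal) * ENNReal.log (s n)) atTop (𝓝 α))
    (ht : Tendsto (fun n => (c n : EReal) * ENNReal.log (t n)) atTop (𝓝 β)) (hβα : β < α) :
    α ≤ liminf (fun n => (c n : EReal) * ENNReal.log (u n)) atTop := by
  refine EReal.le_liminf_of_le_add_max ?_ (by simpa using hc0.mul_const (Real.log 2)) hs ht hβα
  filter_upwards [hc] with n hn
  exact (mul_le_mul_of_nonneg_left (ENNReal.log_monotone (hsut n)) (EReal.coe_nonneg.2 hn)).trans
    (EReal.coe_mul_log_add_le hn _ _)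

variable (μ : ℕ → Measure ℝ)

theorem le_liminf_mul_log_measure_Ioo_of_Ici {x y z b : ℝ} (hxy : x < y) (hzb : z ≤ b)
    {α β : EReal}
    (hy : Tendsto (fun n => (c n : EReal) * ENNReal.log (μ n (Ici y))) atTop (𝓝 α))
    (hz : Tendsto (fun n => (c n : EReal) * ENNReal.log (μ n (Ici z))) atTop (𝓝 β))
    (hβα : β < α) :
    α ≤ liminf (fun n => (c n : EReal) * ENNReal.log (μ n (Ioo x b))) atTop := by
  refine le_liminf_mul_log_of_le_add hc hc0 (fun n => ?_) hy hz hβα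
  refine (measure_mono fun t (ht : y ≤ t) => ?_).trans (measure_union_le _ _)
  rcases lt_or_ge t z with htz | hzt
  · exact Or.inl ⟨hxy.trans_le ht, htz.trans_le hzb⟩
  · exact Or.inr hzt

theorem le_liminf_mul_log_measure_Ioo_of_Iic {x y z b : ℝ} (hxz : x ≤ z) (hyb : y < b)
    {α β : EReal}
    (hy : Tendsto (fun n => (c n : EReal) * ENNReal.log (μ n (Iic y))) atTop (𝓝 α))
    (hz : Tendsto (fun n => (c n : EReal) * ENNReal.log (μ n (Iic z))) atTop (𝓝 β))
    (hβα : β < α) :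
    α ≤ liminf (fun n => (c n : EReal) * ENNReal.log (μ n (Ioo x b))) atTop := by
  refine le_liminf_mul_log_of_le_add hc hc0 (fun n => ?_) hy hz hβα
  refine (measure_mono fun t (ht : t ≤ y) => ?_).trans (measure_union_le _ _)
  rcases lt_or_ge z t with hzt | htz
  · exact Or.inl ⟨hxz.trans_lt hzt, ht.trans_lt hyb⟩
  · exact Or.inr htz

end Rate

theorem stmt4_general (μ : ℕ → Measure ℝ)
    (a : ℕ → ℝ) (ha' : Tendsto a atTop atTop)
    (σ2 : ℝ) (hσ2 : 0 < σ2) (I : ℝ → ℝ) (hI : I = fun x => x ^ 2 / (2 * σ2))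
    (hupper : ∀ x : ℝ, 0 ≤ x →
      Tendsto (fun n => (((a n)⁻¹ : ℝ) : EReal) * ENNReal.log (μ n (Set.Ici x)))
        atTop (nhds ((-(I x) : ℝ) : EReal)))
    (hlower : ∀ x : ℝ, x ≤ 0 →
      Tendsto (fun n => (((a n)⁻¹ : ℝ) : EReal) * ENNReal.log (μ n (Set.Iic x)))
        atTop (nhds ((-(I x) : ℝ) : EReal))) :
    ∀ (x : ℝ) (ε : ℝ), 0 < ε →
      -(⨅ y ∈ Set.Ioo (x - ε) (x + ε), (I y : EReal))
        ≤ liminf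
            (fun n => (((a n)⁻¹ : ℝ) : EReal) * ENNReal.log (μ n (Set.Ioo (x - ε) (x + ε))))
            atTop := by
  intro x ε _
  rw [EReal.neg_le]
  refine le_iInf₂ fun y ⟨hxy, hyx⟩ => ?_
  rw [EReal.neg_le, ← EReal.coe_neg]
  have hc : ∀ᶠ n in atTop, 0 ≤ (a n)⁻¹ := (ha'.eventually_ge_atTop 0).mono fun n => inv_nonneg.2
  have hc0 : Tendsto (fun n => (a n)⁻¹) atTop (𝓝 0) := ha'.inv_tendsto_atTop
  have hI_lt {z : ℝ} (hyz : y ^ 2 < z ^ 2) : ((-I z : ℝ) : EReal) < ((-I y : ℝ) : EReal) := by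
    subst hI
    exact EReal.coe_lt_coe_iff.2 (neg_lt_neg (div_lt_div_of_pos_right hyz (by positivity)))
  rcases le_or_gt 0 y with hy0 | hy0
  · obtain ⟨z, hyz, hzx⟩ := exists_between hyx
    exact le_liminf_mul_log_measure_Ioo_of_Ici hc hc0 μ hxy hzx.le (hupper y hy0)
      (hupper z (hy0.trans hyz.le)) (hI_lt (by nlinarith))
  · obtain ⟨z, hxz, hzy⟩ := exists_between hxy
    exact le_liminf_mul_log_measure_Ioo_of_Iic hc hc0 μ hxz.le hyx (hlower y hy0.le)
      (hlower z (hzy.trans hy0).le) (hI_lt (by nlinarith))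

/-- Under the same half-line assumptions as in Statement 3, the LDP lower
bound holds for every open ball: for all `x ∈ ℝ` and `ε > 0`,
`liminf (1/a_n) log μ_n ((x−ε, x+ε)) ≥ −inf_{y ∈ (x−ε,x+ε)} I(y)`, where
`I y = y²/(2σ²)`. Logarithms are `ENNReal.log` (valued in `EReal`). -/
theorem stmt4 (μ : ℕ → Measure ℝ) [∀ n, IsProbabilityMeasure (μ n)]
    (a : ℕ → ℝ) (ha : ∀ n, 0 < a n) (ha' : Tendsto a atTop atTop)
    (σ2 : ℝ) (hσ2 : 0 < σ2) (I : ℝ → ℝ) (hI : I = fun x => x ^ 2 / (2 * σ2))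
    (hupper : ∀ x : ℝ, 0 ≤ x →
      Tendsto (fun n => (((a n)⁻¹ : ℝ) : EReal) * ENNReal.log (μ n (Set.Ici x)))
        atTop (nhds ((-(I x) : ℝ) : EReal)))
    (hlower : ∀ x : ℝ, x ≤ 0 →
      Tendsto (fun n => (((a n)⁻¹ : ℝ) : EReal) * ENNReal.log (μ n (Set.Iic x)))
        atTop (nhds ((-(I x) : ℝ) : EReal))) :
    ∀ (x : ℝ) (ε : ℝ), 0 < ε →
      -(⨅ y ∈ Set.Ioo (x - ε) (x + ε), (I y : EReal))
        ≤ liminf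
            (fun n => (((a n)⁻¹ : ℝ) : EReal) * ENNReal.log (μ n (Set.Ioo (x - ε) (x + ε))))
            atTop :=
  stmt4_general μ a ha' σ2 hσ2 I hI hupper hlower
end

section
/- Let (μ_n) be a sequence of Borel probability measures on ℝ, let (a_n) be a sequence of positive reals with a_n → ∞, let σ² > 0, and set I(x) = x²/(2σ²). Assume that for every x ≥ 0, lim_{n→∞} (1/a_n) log μ_n([x,∞)) = −I(x), and for every x ≤ 0, lim_{n→∞} (1/a_n) log μ_n((−∞,x]) = −I(x). Then (μ_n) satisfies the LDP with speed (a_n) and rate function I: for every closed set C ⊆ ℝ, limsup_{n→∞} (1/a_n) log μ_n(C) ≤ −inf_{x∈C} I(x), and for every open set O ⊆ ℝ, liminf_{n→∞} (1/a_n) log μ_n(O) ≥ −inf_{x∈O} I(x). -/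
/-!
Write `(1/a_n) log m_n` for the exponential rate of a sequence `m_n`. Since
`log (u + v) ≤ log 2 + max (log u) (log v)` and `log 2 / a_n → 0`, the rate of a sum is at most the
maximum of the rates, and multiplying by a constant does not change rates.

Upper bound: a closed set `C` lies in `(-∞, q] ∪ [p, ∞)`, where `q = max (C ∩ (-∞, 0])` and
`p = min (C ∩ [0, ∞))` are points of `C`, so the rate of `μ_n C` is at most
`max (-I q) (-I p) ≤ -inf_C I`.

Lower bound: an open set containing `x ≥ 0` contains some `[x, u)` with `u > x`, and
`μ_n [x, u) ≥ μ_n [x, ∞) - μ_n [u, ∞) ≥ μ_n [x, ∞) / 2` eventually, because `I u > I x` makes the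
second tail decay at a strictly faster exponential rate. The case `x ≤ 0` is symmetric.
-/

open MeasureTheory Filter Set

/-- A sequence of Borel probability measures on `ℝ` satisfies the LDP with speed `a`
and rate function `I`. Logarithms of measures are taken via `ENNReal.log` (valued in
`EReal`, so that `log 0 = ⊥`), and infima of the rate function are taken in `EReal`. -/
def SatisfiesLDP (μ : ℕ → Measure ℝ) (a : ℕ → ℝ) (I : ℝ → ℝ) : Prop :=
  (∀ C : Set ℝ, IsClosed C →
    limsup (fun n => (((a n)⁻¹ : ℝ) : EReal) * ENNReal.log (μ n C)) atTop
      ≤ -(⨅ x ∈ C, (I x : EReal))) ∧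
  (∀ O : Set ℝ, IsOpen O →
    -(⨅ x ∈ O, (I x : EReal))
      ≤ liminf (fun n => (((a n)⁻¹ : ℝ) : EReal) * ENNReal.log (μ n O)) atTop)


open scoped ENNReal Topology

noncomputable def logRate (a : ℕ → ℝ) (m : ℕ → ℝ≥0∞) (n : ℕ) : EReal :=
  ((a n)⁻¹ : ℝ) * ENNReal.log (m n)

section LogRate

variable {a : ℕ → ℝ} {m m' : ℕ → ℝ≥0∞}

lemma logRate_mono {n : ℕ} (ha : 0 ≤ a n) (h : m n ≤ m' n) :
    logRate a m n ≤ logRate a m' n :=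
  mul_le_mul_of_nonneg_left (ENNReal.log_monotone h) (EReal.coe_nonneg.2 (inv_nonneg.2 ha))

lemma logRate_mul {n : ℕ} (ha : 0 ≤ a n) :
    logRate a (m * m') n = logRate a m n + logRate a m' n :=
  (congrArg _ ENNReal.log_mul_add).trans <|
    EReal.left_distrib_of_nonneg_of_ne_top (EReal.coe_nonneg.2 (inv_nonneg.2 ha))
      (EReal.coe_ne_top _) _ _

lemma logRate_max {n : ℕ} (ha : 0 ≤ a n) :
    logRate a (m ⊔ m') n = max (logRate a m n) (logRate a m' n) :=
  ((monotone_id.const_mul (EReal.coe_nonneg.2 (inv_nonneg.2 ha))).comp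
    ENNReal.log_monotone).map_max

lemma limsup_logRate_zero (ha : ∀ n, 0 < a n) : limsup (logRate a 0) atTop = ⊥ := by
  have hbot : logRate a 0 = fun _ => ⊥ := funext fun n => by
    simp [logRate, EReal.coe_mul_bot_of_pos (inv_pos.2 (ha n))]
  rw [hbot, limsup_const]

lemma tendsto_logRate_const (ha : Tendsto a atTop atTop) {k : ℝ≥0∞} (hk₀ : k ≠ 0) (hk : k ≠ ⊤) :
    Tendsto (logRate a fun _ => k) atTop (𝓝 0) := by
  have hlog : (logRate a fun _ => k) = fun n => (((a n)⁻¹ * Real.log k.toReal : ℝ) : EReal) := by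
    funext n
    rw [logRate, ENNReal.log_pos_real hk₀ hk, EReal.coe_mul]
  rw [hlog, ← EReal.coe_zero, EReal.tendsto_coe]
  simpa using ha.inv_tendsto_atTop.mul_const (Real.log k.toReal)

lemma limsup_logRate_const_mul_le (ha : ∀ n, 0 ≤ a n) (ha' : Tendsto a atTop atTop) {k : ℝ≥0∞}
    (hk₀ : k ≠ 0) (hk : k ≠ ⊤) :
    limsup (logRate a fun n => k * m n) atTop ≤ limsup (logRate a m) atTop := by
  have hsplit : (logRate a fun n => k * m n) = (logRate a fun _ => k) + logRate a m :=
    funext fun n => logRate_mul (ha n)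
  have hk0 := (tendsto_logRate_const ha' hk₀ hk).limsup_eq
  rw [hsplit]
  refine (EReal.limsup_add_le (.inl ?_) (.inl ?_)).trans_eq ?_ <;> simp [hk0]

lemma liminf_logRate_le_const_mul (ha : ∀ n, 0 ≤ a n) (ha' : Tendsto a atTop atTop) {k : ℝ≥0∞}
    (hk₀ : k ≠ 0) (hk : k ≠ ⊤) :
    liminf (logRate a m) atTop ≤ liminf (logRate a fun n => k * m n) atTop := by
  have hsplit : (logRate a fun n => k * m n) = (logRate a fun _ => k) + logRate a m :=
    funext fun n => logRate_mul (ha n)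
  rw [hsplit]
  refine le_of_eq_of_le ?_ EReal.le_liminf_add
  simp [(tendsto_logRate_const ha' hk₀ hk).liminf_eq]

theorem limsup_logRate_add_le (ha : ∀ n, 0 ≤ a n) (ha' : Tendsto a atTop atTop) :
    limsup (logRate a (m + m')) atTop
      ≤ max (limsup (logRate a m) atTop) (limsup (logRate a m') atTop) :=
  calc limsup (logRate a (m + m')) atTop
      ≤ limsup (logRate a fun n => 2 * (m ⊔ m') n) atTop :=
        limsup_le_limsup (.of_forall fun n => logRate_mono (ha n) (by
          simpa [two_mul] using add_le_add (le_max_left (m n) (m' n)) (le_max_right (m n) (m' n))))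
    _ ≤ limsup (logRate a (m ⊔ m')) atTop :=
        limsup_logRate_const_mul_le ha ha' two_ne_zero ENNReal.ofNat_ne_top
    _ = limsup (fun n => max (logRate a m n) (logRate a m' n)) atTop :=
        congrArg (limsup · atTop) (funext fun n => logRate_max (ha n))
    _ = max (limsup (logRate a m) atTop) (limsup (logRate a m') atTop) := limsup_max

theorem liminf_logRate_le_sub (ha : ∀ n, 0 ≤ a n) (ha' : Tendsto a atTop atTop)
    (hm : ∀ n, m n ≠ ⊤) (h : limsup (logRate a m') atTop < liminf (logRate a m) atTop) :
    liminf (logRate a m) atTop ≤ liminf (logRate a (m - m')) atTop := by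
  obtain ⟨x, hm'x, hxm⟩ := exists_between h
  obtain ⟨r, hm'r, hrx⟩ := EReal.exists_between_coe_real hm'x
  obtain ⟨s, hxs, hsm⟩ := EReal.exists_between_coe_real hxm
  have hrs : r - s < 0 := sub_neg.2 (EReal.coe_lt_coe_iff.1 (hrx.trans hxs))
  have hhalf := tendsto_logRate_const ha' (k := 2⁻¹) (by simp) (by simp)
  have hsmall : ∀ᶠ n in atTop, m' n ≤ 2⁻¹ * m n := by
    filter_upwards [eventually_lt_of_limsup_lt hm'r, eventually_lt_of_lt_liminf hsm,
      hhalf.eventually (eventually_gt_nhds (EReal.coe_lt_coe_iff.2 hrs))] with n hm'n hmn hhalfn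
    have hlt : logRate a m' n < logRate a (fun n => 2⁻¹ * m n) n :=
      calc logRate a m' n < r := hm'n
        _ = ((r - s : ℝ) : EReal) + s := by rw [← EReal.coe_add, sub_add_cancel]
        _ < logRate a (fun _ => 2⁻¹) n + logRate a m n := EReal.add_lt_add hhalfn hmn
        _ = logRate a (fun n => 2⁻¹ * m n) n := (logRate_mul (ha n)).symm
    exact (not_le.1 fun hle => hlt.not_ge (logRate_mono (ha n) hle)).le
  calc liminf (logRate a m) atTop ≤ liminf (logRate a fun n => 2⁻¹ * m n) atTop :=
        liminf_logRate_le_const_mul ha ha' (by simp) (by simp)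
    _ ≤ liminf (logRate a (m - m')) atTop := by
        refine liminf_le_liminf (hsmall.mono fun n hn => logRate_mono (ha n) ?_)
        calc 2⁻¹ * m n = m n - m n / 2 := by rw [ENNReal.sub_half (hm n), ENNReal.div_eq_inv_mul]
          _ ≤ m n - m' n := tsub_le_tsub_left (by rwa [ENNReal.div_eq_inv_mul]) _

end LogRate

section TailsToLDP

variable {μ : ℕ → Measure ℝ} {a : ℕ → ℝ} {I : ℝ → ℝ}

lemma limsup_logRate_le_neg_iInf (ha : ∀ n, 0 ≤ a n) {C F T : Set ℝ} {p : ℝ} (hp : p ∈ C)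
    (hFT : F ⊆ T) (hT : Tendsto (logRate a fun n => μ n T) atTop (𝓝 ((-(I p) : ℝ) : EReal))) :
    limsup (logRate a fun n => μ n F) atTop ≤ -⨅ x ∈ C, (I x : EReal) :=
  calc limsup (logRate a fun n => μ n F) atTop ≤ limsup (logRate a fun n => μ n T) atTop :=
        limsup_le_limsup (.of_forall fun n => logRate_mono (ha n) (measure_mono hFT))
    _ = ((-(I p) : ℝ) : EReal) := hT.limsup_eq
    _ ≤ -⨅ x ∈ C, (I x : EReal) := by
        rw [EReal.coe_neg]
        exact EReal.neg_le_neg_iff.2 (iInf₂_le p hp)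

lemma limsup_logRate_inter_Ici_le (ha : ∀ n, 0 < a n)
    (hupper : ∀ x, 0 ≤ x →
      Tendsto (logRate a fun n => μ n (Ici x)) atTop (𝓝 ((-(I x) : ℝ) : EReal)))
    {C : Set ℝ} (hC : IsClosed C) :
    limsup (logRate a fun n => μ n (C ∩ Ici 0)) atTop ≤ -⨅ x ∈ C, (I x : EReal) := by
  rcases (C ∩ Ici 0).eq_empty_or_nonempty with hempty | hne
  · simp only [hempty, measure_empty]
    exact (limsup_logRate_zero ha).trans_le bot_le
  have hbdd : BddBelow (C ∩ Ici 0) := ⟨0, fun _ hx => hx.2⟩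
  have hp := (hC.inter isClosed_Ici).csInf_mem hne hbdd
  exact limsup_logRate_le_neg_iInf (fun n => (ha n).le) hp.1 (fun _ hx => csInf_le hbdd hx)
    (hupper _ hp.2)

lemma limsup_logRate_inter_Iic_le (ha : ∀ n, 0 < a n)
    (hlower : ∀ x, x ≤ 0 →
      Tendsto (logRate a fun n => μ n (Iic x)) atTop (𝓝 ((-(I x) : ℝ) : EReal)))
    {C : Set ℝ} (hC : IsClosed C) :
    limsup (logRate a fun n => μ n (C ∩ Iic 0)) atTop ≤ -⨅ x ∈ C, (I x : EReal) := by
  rcases (C ∩ Iic 0).eq_empty_or_nonempty with hempty | hne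
  · simp only [hempty, measure_empty]
    exact (limsup_logRate_zero ha).trans_le bot_le
  have hbdd : BddAbove (C ∩ Iic 0) := ⟨0, fun _ hx => hx.2⟩
  have hq := (hC.inter isClosed_Iic).csSup_mem hne hbdd
  exact limsup_logRate_le_neg_iInf (fun n => (ha n).le) hq.1 (fun _ hx => le_csSup hbdd hx)
    (hlower _ hq.2)

theorem limsup_logRate_le_of_isClosed (ha : ∀ n, 0 < a n) (ha' : Tendsto a atTop atTop)
    (hupper : ∀ x, 0 ≤ x →
      Tendsto (logRate a fun n => μ n (Ici x)) atTop (𝓝 ((-(I x) : ℝ) : EReal)))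
    (hlower : ∀ x, x ≤ 0 →
      Tendsto (logRate a fun n => μ n (Iic x)) atTop (𝓝 ((-(I x) : ℝ) : EReal)))
    {C : Set ℝ} (hC : IsClosed C) :
    limsup (logRate a fun n => μ n C) atTop ≤ -⨅ x ∈ C, (I x : EReal) := by
  have hcover : ∀ n, μ n C ≤ μ n (C ∩ Iic 0) + μ n (C ∩ Ici 0) := fun n =>
    (measure_mono (by rw [← inter_union_distrib_left, Iic_union_Ici, inter_univ])).trans
      (measure_union_le _ _)
  calc limsup (logRate a fun n => μ n C) atTop
      ≤ limsup (logRate a ((fun n => μ n (C ∩ Iic 0)) + fun n => μ n (C ∩ Ici 0))) atTop :=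
        limsup_le_limsup (.of_forall fun n => logRate_mono (ha n).le (hcover n))
    _ ≤ _ := limsup_logRate_add_le (fun n => (ha n).le) ha'
    _ ≤ -⨅ x ∈ C, (I x : EReal) :=
        max_le (limsup_logRate_inter_Iic_le ha hlower hC) (limsup_logRate_inter_Ici_le ha hupper hC)

lemma neg_le_liminf_logRate_of_nonneg [∀ n, IsFiniteMeasure (μ n)] (ha : ∀ n, 0 ≤ a n)
    (ha' : Tendsto a atTop atTop) (hI : StrictMonoOn I (Ici 0))
    (hupper : ∀ x, 0 ≤ x →
      Tendsto (logRate a fun n => μ n (Ici x)) atTop (𝓝 ((-(I x) : ℝ) : EReal)))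
    {O : Set ℝ} (hO : IsOpen O) {x : ℝ} (hxO : x ∈ O) (hx : 0 ≤ x) :
    ((-(I x) : ℝ) : EReal) ≤ liminf (logRate a fun n => μ n O) atTop := by
  obtain ⟨u, hxu, hIco⟩ := exists_Ico_subset_of_mem_nhds (hO.mem_nhds hxO) ⟨x + 1, lt_add_one x⟩
  have hu : 0 ≤ u := hx.trans hxu.le
  have hgap : limsup (logRate a fun n => μ n (Ici u)) atTop
      < liminf (logRate a fun n => μ n (Ici x)) atTop := by
    rw [(hupper u hu).limsup_eq, (hupper x hx).liminf_eq, EReal.coe_lt_coe_iff, neg_lt_neg_iff]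
    exact hI hx hu hxu
  calc ((-(I x) : ℝ) : EReal) = liminf (logRate a fun n => μ n (Ici x)) atTop :=
        (hupper x hx).liminf_eq.symm
    _ ≤ liminf (logRate a ((fun n => μ n (Ici x)) - fun n => μ n (Ici u))) atTop :=
        liminf_logRate_le_sub ha ha' (fun n => measure_ne_top _ _) hgap
    _ ≤ liminf (logRate a fun n => μ n O) atTop :=
        liminf_le_liminf (.of_forall fun n => logRate_mono (ha n)
          (le_measure_sdiff.trans (measure_mono fun _ hy => hIco ⟨hy.1, not_le.1 hy.2⟩)))

lemma neg_le_liminf_logRate_of_nonpos [∀ n, IsFiniteMeasure (μ n)] (ha : ∀ n, 0 ≤ a n)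
    (ha' : Tendsto a atTop atTop) (hI : StrictAntiOn I (Iic 0))
    (hlower : ∀ x, x ≤ 0 →
      Tendsto (logRate a fun n => μ n (Iic x)) atTop (𝓝 ((-(I x) : ℝ) : EReal)))
    {O : Set ℝ} (hO : IsOpen O) {x : ℝ} (hxO : x ∈ O) (hx : x ≤ 0) :
    ((-(I x) : ℝ) : EReal) ≤ liminf (logRate a fun n => μ n O) atTop := by
  obtain ⟨l, hlx, hIoc⟩ := exists_Ioc_subset_of_mem_nhds (hO.mem_nhds hxO) ⟨x - 1, sub_one_lt x⟩
  have hl : l ≤ 0 := hlx.le.trans hx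
  have hgap : limsup (logRate a fun n => μ n (Iic l)) atTop
      < liminf (logRate a fun n => μ n (Iic x)) atTop := by
    rw [(hlower l hl).limsup_eq, (hlower x hx).liminf_eq, EReal.coe_lt_coe_iff, neg_lt_neg_iff]
    exact hI hl hx hlx
  calc ((-(I x) : ℝ) : EReal) = liminf (logRate a fun n => μ n (Iic x)) atTop :=
        (hlower x hx).liminf_eq.symm
    _ ≤ liminf (logRate a ((fun n => μ n (Iic x)) - fun n => μ n (Iic l))) atTop :=
        liminf_logRate_le_sub ha ha' (fun n => measure_ne_top _ _) hgap
    _ ≤ liminf (logRate a fun n => μ n O) atTop :=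
        liminf_le_liminf (.of_forall fun n => logRate_mono (ha n)
          (le_measure_sdiff.trans (measure_mono fun _ hy => hIoc ⟨not_le.1 hy.2, hy.1⟩)))

theorem neg_iInf_le_liminf_logRate_of_isOpen [∀ n, IsFiniteMeasure (μ n)] (ha : ∀ n, 0 ≤ a n)
    (ha' : Tendsto a atTop atTop) (hI_mono : StrictMonoOn I (Ici 0))
    (hI_anti : StrictAntiOn I (Iic 0))
    (hupper : ∀ x, 0 ≤ x →
      Tendsto (logRate a fun n => μ n (Ici x)) atTop (𝓝 ((-(I x) : ℝ) : EReal)))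
    (hlower : ∀ x, x ≤ 0 →
      Tendsto (logRate a fun n => μ n (Iic x)) atTop (𝓝 ((-(I x) : ℝ) : EReal)))
    {O : Set ℝ} (hO : IsOpen O) :
    -(⨅ x ∈ O, (I x : EReal)) ≤ liminf (logRate a fun n => μ n O) atTop := by
  refine EReal.neg_le.2 (le_iInf₂ fun x hxO => EReal.neg_le.2 ?_)
  rw [← EReal.coe_neg]
  rcases le_total 0 x with hx | hx
  · exact neg_le_liminf_logRate_of_nonneg ha ha' hI_mono hupper hO hxO hx
  · exact neg_le_liminf_logRate_of_nonpos ha ha' hI_anti hlower hO hxO hx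

theorem satisfiesLDP_of_tendsto_logRate_tails [∀ n, IsFiniteMeasure (μ n)] (ha : ∀ n, 0 < a n)
    (ha' : Tendsto a atTop atTop) (hI_mono : StrictMonoOn I (Ici 0))
    (hI_anti : StrictAntiOn I (Iic 0))
    (hupper : ∀ x, 0 ≤ x →
      Tendsto (logRate a fun n => μ n (Ici x)) atTop (𝓝 ((-(I x) : ℝ) : EReal)))
    (hlower : ∀ x, x ≤ 0 →
      Tendsto (logRate a fun n => μ n (Iic x)) atTop (𝓝 ((-(I x) : ℝ) : EReal))) :
    SatisfiesLDP μ a I :=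
  ⟨fun _ hC => limsup_logRate_le_of_isClosed ha ha' hupper hlower hC,
    fun _ hO => neg_iInf_le_liminf_logRate_of_isOpen (fun n => (ha n).le) ha' hI_mono hI_anti hupper
      hlower hO⟩

end TailsToLDP

/-- If `(1/a_n) log μ_n [x, ∞) → −x²/(2σ²)` for every `x ≥ 0` and
`(1/a_n) log μ_n (−∞, x] → −x²/(2σ²)` for every `x ≤ 0`, with `a_n → ∞` positive and
`σ² > 0`, then `(μ_n)` satisfies the LDP with speed `(a_n)` and rate function
`I x = x²/(2σ²)`. -/
theorem stmt6 (μ : ℕ → Measure ℝ) [∀ n, IsProbabilityMeasure (μ n)]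
    (a : ℕ → ℝ) (ha : ∀ n, 0 < a n) (ha' : Tendsto a atTop atTop)
    (σ2 : ℝ) (hσ2 : 0 < σ2) (I : ℝ → ℝ) (hI : I = fun x => x ^ 2 / (2 * σ2))
    (hupper : ∀ x : ℝ, 0 ≤ x →
      Tendsto (fun n => (((a n)⁻¹ : ℝ) : EReal) * ENNReal.log (μ n (Set.Ici x)))
        atTop (nhds ((-(I x) : ℝ) : EReal)))
    (hlower : ∀ x : ℝ, x ≤ 0 →
      Tendsto (fun n => (((a n)⁻¹ : ℝ) : EReal) * ENNReal.log (μ n (Set.Iic x)))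
        atTop (nhds ((-(I x) : ℝ) : EReal))) :
    SatisfiesLDP μ a I := by
  have hscale : StrictMono fun t : ℝ => t / (2 * σ2) := fun _ _ h =>
    div_lt_div_of_pos_right h (by positivity)
  subst hI
  refine satisfiesLDP_of_tendsto_logRate_tails ha ha' ?_ ?_ hupper hlower
  · exact hscale.comp_strictMonoOn (pow_left_strictMonoOn₀ two_ne_zero)
  · exact hscale.comp_strictAntiOn fun x (hx : x ≤ 0) y (hy : y ≤ 0) hxy => by nlinarith
end

section
/- Let (Ω, F, P) be a probability space, let (X_n) and (Y_n) be sequences of real-valued random variables on Ω such that X_n and Y_n are independent for each n, let (a_n) be positive reals with a_n → ∞, and let 0 < λ < β. Set σ² = λ⁻¹ − β⁻¹, I(x) = x²/(2σ²), J(x) = λx²/2, K(x) = βx²/2. Assume the laws of Y_n satisfy the LDP with speed (a_n) and rate function K, and the laws of X_n + Y_n satisfy the LDP with speed (a_n) and rate function J. Then for every x ≥ 0, limsup_{n→∞} (1/a_n) log P(X_n ≥ x) ≤ −I(x), and for every x ≤ 0, limsup_{n→∞} (1/a_n) log P(X_n ≤ x) ≤ −I(x). -/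
open MeasureTheory ProbabilityTheory Filter Set

/-!
For any threshold `y`, the events `{X_n ≥ x}` and `{Y_n > y}` are independent and together force
`X_n + Y_n ≥ x + y`, so `P(X_n ≥ x) P(Y_n > y) ≤ P(X_n + Y_n ≥ x + y)`. On the exponential scale
the upper bound of the LDP for `X_n + Y_n` and the lower bound of the LDP for `Y_n` give
`limsup (1/a_n) log P(X_n ≥ x) ≤ K(y) − J(x + y)`, and the choice `y = λx/(β − λ)` minimises the
right-hand side to `−I(x)`. The lower tail is symmetric.
-/

lemma EReal.coe_mul_log_add_coe_mul_log_le {t : ℝ} (ht : 0 ≤ t) {p q r : ENNReal}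
    (h : p * q ≤ r) :
    (t : EReal) * ENNReal.log p + t * ENNReal.log q ≤ t * ENNReal.log r := by
  rw [← EReal.left_distrib_of_nonneg_of_ne_top (EReal.coe_nonneg.2 ht) (EReal.coe_ne_top t),
    ← ENNReal.log_mul_add]
  exact mul_le_mul_of_nonneg_left (ENNReal.log_le_log h) (EReal.coe_nonneg.2 ht)

lemma limsup_inv_mul_log_le_sub {Ω : Type*} [MeasurableSpace Ω] (μ : Measure Ω)
    (A B C : ℕ → Set Ω) (a : ℕ → ℝ) (ha : ∀ n, 0 < a n)
    (hmul : ∀ n, μ (A n) * μ (B n) ≤ μ (C n)) {b c : ℝ}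
    (hC : limsup (fun n => (((a n)⁻¹ : ℝ) : EReal) * ENNReal.log (μ (C n))) atTop ≤ c)
    (hB : (b : EReal) ≤
      liminf (fun n => (((a n)⁻¹ : ℝ) : EReal) * ENNReal.log (μ (B n))) atTop) :
    limsup (fun n => (((a n)⁻¹ : ℝ) : EReal) * ENNReal.log (μ (A n))) atTop
      ≤ ((c - b : ℝ) : EReal) := by
  set u := fun n => (((a n)⁻¹ : ℝ) : EReal) * ENNReal.log (μ (A n))
  set v := fun n => (((a n)⁻¹ : ℝ) : EReal) * ENNReal.log (μ (B n))
  have hsum : limsup (u + v) atTop ≤ c := by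
    refine (limsup_le_limsup (Eventually.of_forall fun n => ?_)).trans hC
    exact EReal.coe_mul_log_add_coe_mul_log_le (inv_pos.2 (ha n)).le (hmul n)
  rw [EReal.coe_sub, EReal.le_sub_iff_add_le (by simp) (by simp)]
  calc limsup u atTop + b ≤ limsup u atTop + liminf v atTop := add_le_add_right hB _
    _ ≤ limsup (u + v) atTop := EReal.le_limsup_add
    _ ≤ c := hsum

namespace SatisfiesLDP

variable {μ : ℕ → Measure ℝ} {a : ℕ → ℝ} {I : ℝ → ℝ}

lemma limsup_le_of_forall_le (hμ : SatisfiesLDP μ a I) {C : Set ℝ} (hC : IsClosed C) {r : ℝ}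
    (hr : ∀ z ∈ C, I r ≤ I z) :
    limsup (fun n => (((a n)⁻¹ : ℝ) : EReal) * ENNReal.log (μ n C)) atTop
      ≤ ((-I r : ℝ) : EReal) := by
  refine (hμ.1 C hC).trans ?_
  rw [EReal.coe_neg, EReal.neg_le_neg_iff]
  exact le_iInf₂ fun z hz => EReal.coe_le_coe_iff.2 (hr z hz)

lemma le_liminf_of_continuousWithinAt (hμ : SatisfiesLDP μ a I) {O : Set ℝ} (hO : IsOpen O)
    {r : ℝ} (hr : r ∈ closure O) (hI : ContinuousWithinAt I O r) :
    ((-I r : ℝ) : EReal)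
      ≤ liminf (fun n => (((a n)⁻¹ : ℝ) : EReal) * ENNReal.log (μ n O)) atTop := by
  refine le_trans ?_ (hμ.2 O hO)
  rw [EReal.coe_neg, EReal.neg_le_neg_iff]
  have := mem_closure_iff_nhdsWithin_neBot.1 hr
  refine ge_of_tendsto (continuous_coe_real_ereal.continuousAt.tendsto.comp hI) ?_
  filter_upwards [self_mem_nhdsWithin] with z hz using iInf₂_le z hz

end SatisfiesLDP

lemma limsup_inv_mul_log_preimage_le_of_indepFun {Ω : Type*} [MeasurableSpace Ω]
    {P : Measure Ω} {X Y : ℕ → Ω → ℝ} (hX : ∀ n, Measurable (X n)) (hY : ∀ n, Measurable (Y n))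
    (hindep : ∀ n, IndepFun (X n) (Y n) P) {a : ℕ → ℝ} (ha : ∀ n, 0 < a n) {J K : ℝ → ℝ}
    (hLDPY : SatisfiesLDP (fun n => P.map (Y n)) a K)
    (hLDPXY : SatisfiesLDP (fun n => P.map (fun ω => X n ω + Y n ω)) a J)
    {S O C : Set ℝ} (hS : MeasurableSet S) (hO : IsOpen O) (hC : IsClosed C)
    (hadd : ∀ s ∈ S, ∀ t ∈ O, s + t ∈ C) {y z : ℝ} (hy : y ∈ closure O)
    (hK : ContinuousWithinAt K O y) (hz : ∀ w ∈ C, J z ≤ J w) :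
    limsup (fun n => (((a n)⁻¹ : ℝ) : EReal) * ENNReal.log (P (X n ⁻¹' S))) atTop
      ≤ ((K y - J z : ℝ) : EReal) := by
  have hupper := hLDPXY.limsup_le_of_forall_le hC hz
  have hlower := hLDPY.le_liminf_of_continuousWithinAt hO hy hK
  have hXY : ∀ n, Measurable fun ω => X n ω + Y n ω := fun n => (hX n).add (hY n)
  simp only [Measure.map_apply (hXY _) hC.measurableSet,
    Measure.map_apply (hY _) hO.measurableSet] at hupper hlower
  have hmul : ∀ n, P (X n ⁻¹' S) * P (Y n ⁻¹' O) ≤ P ((fun ω => X n ω + Y n ω) ⁻¹' C) := by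
    intro n
    rw [← (hindep n).measure_inter_preimage_eq_mul _ _ hS hO.measurableSet]
    exact measure_mono fun ω hω => hadd _ hω.1 _ hω.2
  have := limsup_inv_mul_log_le_sub P _ _ _ a ha hmul hupper hlower
  rwa [neg_sub_neg] at this

lemma mul_sq_div_two_le_of_abs_le {c z w : ℝ} (hc : 0 ≤ c) (h : |z| ≤ |w|) :
    c * z ^ 2 / 2 ≤ c * w ^ 2 / 2 := by
  gcongr c * ?_ / 2
  exact sq_le_sq.2 h

lemma quadratic_rate_identity {lam β : ℝ} (hlam : lam ≠ 0) (hβ : β ≠ 0) (hlamβ : β - lam ≠ 0)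
    (x : ℝ) :
    β * (lam * x / (β - lam)) ^ 2 / 2 - lam * (x + lam * x / (β - lam)) ^ 2 / 2
      = -(x ^ 2 / (2 * (lam⁻¹ - β⁻¹))) := by
  field_simp
  ring

theorem stmt8_general {Ω : Type*} [MeasurableSpace Ω] (P : Measure Ω)
    (X Y : ℕ → Ω → ℝ) (hX : ∀ n, Measurable (X n)) (hY : ∀ n, Measurable (Y n))
    (hindep : ∀ n, IndepFun (X n) (Y n) P)
    (a : ℕ → ℝ) (ha : ∀ n, 0 < a n)
    (lam β : ℝ) (hlam : 0 < lam) (hlamβ : lam < β)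
    (σ2 : ℝ) (hσ2 : σ2 = lam⁻¹ - β⁻¹)
    (I J K : ℝ → ℝ)
    (hI : I = fun x => x ^ 2 / (2 * σ2))
    (hJ : J = fun x => lam * x ^ 2 / 2)
    (hK : K = fun x => β * x ^ 2 / 2)
    (hLDPY : SatisfiesLDP (fun n => P.map (Y n)) a K)
    (hLDPXY : SatisfiesLDP (fun n => P.map (fun ω => X n ω + Y n ω)) a J) :
    (∀ x : ℝ, 0 ≤ x →
      limsup (fun n => (((a n)⁻¹ : ℝ) : EReal) * ENNReal.log (P {ω | x ≤ X n ω})) atTop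
        ≤ ((-(I x) : ℝ) : EReal)) ∧
    (∀ x : ℝ, x ≤ 0 →
      limsup (fun n => (((a n)⁻¹ : ℝ) : EReal) * ENNReal.log (P {ω | X n ω ≤ x})) atTop
        ≤ ((-(I x) : ℝ) : EReal)) := by
  subst hI hJ hK hσ2
  have hβ : 0 < β := hlam.trans hlamβ
  have hgap : 0 < β - lam := sub_pos.2 hlamβ
  have hrate := quadratic_rate_identity hlam.ne' hβ.ne' hgap.ne'
  have hKcont : Continuous fun x : ℝ => β * x ^ 2 / 2 := by fun_prop
  constructor
  · intro x hx
    set y := lam * x / (β - lam)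
    have := limsup_inv_mul_log_preimage_le_of_indepFun hX hY hindep ha hLDPY hLDPXY
      measurableSet_Ici isOpen_Ioi isClosed_Ici (C := Ici (x + y)) (y := y) (z := x + y)
      (fun s (hs : x ≤ s) t (ht : y < t) => show x + y ≤ s + t by linarith)
      (by simp) hKcont.continuousWithinAt
      fun w (hw : x + y ≤ w) =>
        mul_sq_div_two_le_of_abs_le hlam.le (abs_le_abs_of_nonneg (by positivity) hw)
    rwa [hrate] at this
  · intro x hx
    set y := lam * x / (β - lam)
    have hy : y ≤ 0 :=
      div_nonpos_of_nonpos_of_nonneg (mul_nonpos_of_nonneg_of_nonpos hlam.le hx) hgap.le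
    have := limsup_inv_mul_log_preimage_le_of_indepFun hX hY hindep ha hLDPY hLDPXY
      measurableSet_Iic isOpen_Iio isClosed_Iic (C := Iic (x + y)) (y := y) (z := x + y)
      (fun s (hs : s ≤ x) t (ht : t < y) => show s + t ≤ x + y by linarith)
      (by simp) hKcont.continuousWithinAt
      fun w (hw : w ≤ x + y) =>
        mul_sq_div_two_le_of_abs_le hlam.le (abs_le_abs_of_nonpos (by linarith) hw)
    rwa [hrate] at this

/-- Let `X_n, Y_n` be independent for each `n`, `a_n → ∞` positive,
`0 < λ < β`, `σ² = λ⁻¹ − β⁻¹`, `I x = x²/(2σ²)`, `J x = λx²/2`, `K x = βx²/2`. If the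
laws of `Y_n` satisfy the LDP with speed `a_n` and rate `K`, and the laws of `X_n + Y_n`
satisfy the LDP with speed `a_n` and rate `J`, then for every `x ≥ 0`,
`limsup (1/a_n) log P(X_n ≥ x) ≤ −I(x)`, and for every `x ≤ 0`,
`limsup (1/a_n) log P(X_n ≤ x) ≤ −I(x)`. -/
theorem stmt8 {Ω : Type*} [MeasurableSpace Ω] (P : Measure Ω) [IsProbabilityMeasure P]
    (X Y : ℕ → Ω → ℝ) (hX : ∀ n, Measurable (X n)) (hY : ∀ n, Measurable (Y n))
    (hindep : ∀ n, IndepFun (X n) (Y n) P)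
    (a : ℕ → ℝ) (ha : ∀ n, 0 < a n) (ha' : Tendsto a atTop atTop)
    (lam β : ℝ) (hlam : 0 < lam) (hlamβ : lam < β)
    (σ2 : ℝ) (hσ2 : σ2 = lam⁻¹ - β⁻¹)
    (I J K : ℝ → ℝ)
    (hI : I = fun x => x ^ 2 / (2 * σ2))
    (hJ : J = fun x => lam * x ^ 2 / 2)
    (hK : K = fun x => β * x ^ 2 / 2)
    (hLDPY : SatisfiesLDP (fun n => P.map (Y n)) a K)
    (hLDPXY : SatisfiesLDP (fun n => P.map (fun ω => X n ω + Y n ω)) a J) :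
    (∀ x : ℝ, 0 ≤ x →
      limsup (fun n => (((a n)⁻¹ : ℝ) : EReal) * ENNReal.log (P {ω | x ≤ X n ω})) atTop
        ≤ ((-(I x) : ℝ) : EReal)) ∧
    (∀ x : ℝ, x ≤ 0 →
      limsup (fun n => (((a n)⁻¹ : ℝ) : EReal) * ENNReal.log (P {ω | X n ω ≤ x})) atTop
        ≤ ((-(I x) : ℝ) : EReal)) :=
  stmt8_general P X Y hX hY hindep a ha lam β hlam hlamβ σ2 hσ2 I J K hI hJ hK hLDPY hLDPXY
end

section
/- Let (Ω, F, P) be a probability space, let (X_n) and (Y_n) be sequences of real-valued random variables on Ω such that X_n and Y_n are independent for each n, let (a_n) be positive reals with a_n → ∞, and let 0 < λ < β. Set J(x) = λx²/2, K(x) = βx²/2. Assume the laws of Y_n satisfy the LDP with speed (a_n) and rate function K, and the laws of X_n + Y_n satisfy the LDP with speed (a_n) and rate function J. Fix x ≥ 0 and ε > 0, and set x₀ = βx/(β−λ). Then lim_{n→∞} P(X_n < x and X_n + Y_n ≥ x₀ + ε) / P(X_n + Y_n ≥ x₀ + ε) = 0 (the denominator being strictly positive for all sufficiently large n). -/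
/-!
Write `S = X + Y` and `c = x₀ + ε`. The LDP lower bound for `S` gives
`P(S ≥ c) ≥ exp(-aₙ(λc²/2 + o(1)))`. Independence gives `P(X ≥ t) P(Y > s) ≤ P(S ≥ t + s)`,
so `X` has upper tails of rate at least `γt²/2`, `γ = λβ/(β-λ)`. Cut `{0 ≤ X < x}` into short
strips `[t, t')`: on `{S ≥ c}` such a strip lies in `{X ≥ t} ∩ {Y ≥ c - t'}`, of rate about
`γt²/2 + β(c-t)²/2`, which exceeds `λc²/2` by at least `(β-λ)ε²/2` as long as `t ≤ x`; the
piece `{X < 0}` lies in `{Y ≥ c}`. Finitely many pieces do not change the exponential rate, so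
the numerator decays strictly faster than the denominator.
-/

open MeasureTheory ProbabilityTheory Filter Set

open scoped ENNReal Topology

/-- `p n ≤ exp (-a n (r - o(1)))`, i.e. `limsup (log p n) / a n ≤ -r`. -/
def DecayRateAtLeast (a : ℕ → ℝ) (p : ℕ → ℝ≥0∞) (r : ℝ) : Prop :=
  ∀ δ > 0, ∀ᶠ n in atTop, p n ≤ ENNReal.ofReal (Real.exp (-(a n * (r - δ))))

/-- `exp (-a n (r + o(1))) ≤ p n`, i.e. `-r ≤ liminf (log p n) / a n`. -/
def DecayRateAtMost (a : ℕ → ℝ) (p : ℕ → ℝ≥0∞) (r : ℝ) : Prop :=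
  ∀ δ > 0, ∀ᶠ n in atTop, ENNReal.ofReal (Real.exp (-(a n * (r + δ)))) ≤ p n

section DecayRate

variable {a : ℕ → ℝ} {p q : ℕ → ℝ≥0∞} {r s : ℝ}

lemma DecayRateAtLeast.mono (h : DecayRateAtLeast a q r) (hpq : ∀ᶠ n in atTop, p n ≤ q n) :
    DecayRateAtLeast a p r := fun δ hδ => by
  filter_upwards [h δ hδ, hpq] with n hqn hpqn
  exact hpqn.trans hqn

lemma DecayRateAtLeast.mono_rate {r' : ℝ} (h : DecayRateAtLeast a p r)
    (ha : ∀ᶠ n in atTop, 0 ≤ a n) (hr : r' ≤ r) : DecayRateAtLeast a p r' := fun δ hδ => by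
  filter_upwards [h δ hδ, ha] with n hpn han
  exact hpn.trans (by gcongr)

lemma DecayRateAtMost.mono (h : DecayRateAtMost a p r) (hpq : ∀ᶠ n in atTop, p n ≤ q n) :
    DecayRateAtMost a q r := fun δ hδ => by
  filter_upwards [h δ hδ, hpq] with n hpn hpqn
  exact hpn.trans hpqn

lemma DecayRateAtMost.mono_rate {r' : ℝ} (h : DecayRateAtMost a p r)
    (ha : ∀ᶠ n in atTop, 0 ≤ a n) (hr : r ≤ r') : DecayRateAtMost a p r' := fun δ hδ => by
  filter_upwards [h δ hδ, ha] with n hpn han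
  exact le_trans (by gcongr) hpn

lemma DecayRateAtMost.of_forall_gt (h : ∀ r' > r, DecayRateAtMost a p r') :
    DecayRateAtMost a p r := fun δ hδ => by
  filter_upwards [h (r + δ / 2) (by linarith) (δ / 2) (by linarith)] with n hn
  convert hn using 5
  ring

lemma DecayRateAtMost.eventually_pos (h : DecayRateAtMost a p r) : ∀ᶠ n in atTop, 0 < p n := by
  filter_upwards [h 1 one_pos] with n hn
  exact (ENNReal.ofReal_pos.2 (Real.exp_pos _)).trans_le hn

lemma DecayRateAtLeast.mul (hp : DecayRateAtLeast a p r) (hq : DecayRateAtLeast a q s) :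
    DecayRateAtLeast a (fun n => p n * q n) (r + s) := fun δ hδ => by
  filter_upwards [hp (δ / 2) (by positivity), hq (δ / 2) (by positivity)] with n hpn hqn
  calc p n * q n ≤ ENNReal.ofReal (Real.exp (-(a n * (r - δ / 2))))
        * ENNReal.ofReal (Real.exp (-(a n * (s - δ / 2)))) := mul_le_mul' hpn hqn
    _ = ENNReal.ofReal (Real.exp (-(a n * (r + s - δ)))) := by
      rw [← ENNReal.ofReal_mul (Real.exp_nonneg _), ← Real.exp_add]
      ring_nf

lemma DecayRateAtLeast.of_mul_le (h : DecayRateAtLeast a (fun n => p n * q n) r)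
    (hq : DecayRateAtMost a q s) : DecayRateAtLeast a p (r - s) := fun δ hδ => by
  filter_upwards [h (δ / 2) (by positivity), hq (δ / 2) (by positivity)] with n hn hqn
  set L := ENNReal.ofReal (Real.exp (-(a n * (s + δ / 2))))
  have hL : L ≠ 0 := (ENNReal.ofReal_pos.2 (Real.exp_pos _)).ne'
  rw [← ENNReal.mul_le_mul_iff_left hL ENNReal.ofReal_ne_top,
    ← ENNReal.ofReal_mul (Real.exp_nonneg _), ← Real.exp_add]
  calc p n * L ≤ p n * q n := mul_le_mul' le_rfl hqn
    _ ≤ _ := hn.trans_eq (by ring_nf)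

lemma DecayRateAtLeast.zero : DecayRateAtLeast a (fun _ => 0) r := fun _ _ =>
  Eventually.of_forall fun _ => zero_le

lemma DecayRateAtLeast.add (ha : Tendsto a atTop atTop) (hp : DecayRateAtLeast a p r)
    (hq : DecayRateAtLeast a q r) : DecayRateAtLeast a (p + q) r := fun δ hδ => by
  have hbig : ∀ᶠ n in atTop, 2 ≤ Real.exp (a n * (δ / 2)) :=
    (Real.tendsto_exp_atTop.comp (ha.atTop_mul_const (by positivity))).eventually_ge_atTop 2
  filter_upwards [hp (δ / 2) (by positivity), hq (δ / 2) (by positivity), hbig]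
    with n hpn hqn hn
  calc p n + q n ≤ 2 * ENNReal.ofReal (Real.exp (-(a n * (r - δ / 2)))) := by
        rw [two_mul]; exact add_le_add hpn hqn
    _ ≤ ENNReal.ofReal (Real.exp (a n * (δ / 2)))
        * ENNReal.ofReal (Real.exp (-(a n * (r - δ / 2)))) := by
        gcongr
        exact_mod_cast ENNReal.ofReal_le_ofReal hn
    _ = ENNReal.ofReal (Real.exp (-(a n * (r - δ)))) := by
      rw [← ENNReal.ofReal_mul (Real.exp_nonneg _), ← Real.exp_add]
      ring_nf

lemma DecayRateAtLeast.finset_sum {ι : Type*} (ha : Tendsto a atTop atTop) {p : ι → ℕ → ℝ≥0∞}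
    (s : Finset ι) (h : ∀ i ∈ s, DecayRateAtLeast a (p i) r) :
    DecayRateAtLeast a (fun n => ∑ i ∈ s, p i n) r := by
  classical
  induction s using Finset.induction_on with
  | empty => simpa using DecayRateAtLeast.zero
  | insert i s hi ih =>
    simp_rw [Finset.sum_insert hi]
    exact (h i (s.mem_insert_self i)).add ha (ih fun j hj => h j (Finset.mem_insert_of_mem hj))

lemma DecayRateAtLeast.tendsto_div_zero (ha : Tendsto a atTop atTop) (hp : DecayRateAtLeast a p r)
    (hq : DecayRateAtMost a q s) (hsr : s < r) : Tendsto (fun n => p n / q n) atTop (𝓝 0) := by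
  have hd : 0 < (r - s) / 2 := by linarith
  have hlim : Tendsto (fun n => ENNReal.ofReal (Real.exp (-(a n * ((r - s) / 2))))) atTop (𝓝 0) := by
    simpa using ENNReal.tendsto_ofReal
      (Real.tendsto_exp_atBot.comp (tendsto_neg_atTop_atBot.comp (ha.atTop_mul_const hd)))
  refine tendsto_of_tendsto_of_tendsto_of_le_of_le' tendsto_const_nhds hlim
    (Eventually.of_forall fun _ => zero_le) ?_
  filter_upwards [hp ((r - s) / 4) (by linarith), hq ((r - s) / 4) (by linarith)] with n hpn hqn
  refine ENNReal.div_le_of_le_mul (hpn.trans (le_of_eq_of_le ?_ (mul_le_mul' le_rfl hqn)))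
  rw [← ENNReal.ofReal_mul (Real.exp_nonneg _), ← Real.exp_add]
  ring_nf

end DecayRate

lemma EReal.coe_inv_mul_eq_div (c : ℝ) (L : EReal) : ((c⁻¹ : ℝ) : EReal) * L = L / c := by
  rw [EReal.coe_inv, EReal.div_eq_inv_mul]

namespace SatisfiesLDP

variable {μ : ℕ → Measure ℝ} {a : ℕ → ℝ} {I : ℝ → ℝ}

lemma decayRateAtLeast (h : SatisfiesLDP μ a I) (ha : ∀ᶠ n in atTop, 0 < a n) {C : Set ℝ}
    (hC : IsClosed C) {r : ℝ} (hr : ∀ z ∈ C, r ≤ I z) :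
    DecayRateAtLeast a (fun n => μ n C) r := fun δ hδ => by
  have hlim : limsup (fun n => (((a n)⁻¹ : ℝ) : EReal) * ENNReal.log (μ n C)) atTop
      < ((-(r - δ) : ℝ) : EReal) := by
    refine (h.1 C hC).trans_lt ?_
    calc -(⨅ z ∈ C, (I z : EReal)) ≤ -(r : EReal) :=
          EReal.neg_le_neg_iff.2 (le_iInf₂ fun z hz => EReal.coe_le_coe_iff.2 (hr z hz))
      _ < _ := by exact_mod_cast (by linarith : -r < -(r - δ))
  filter_upwards [eventually_lt_of_limsup_lt hlim, ha] with n hn han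
  rw [EReal.coe_inv_mul_eq_div, EReal.div_lt_iff (by exact_mod_cast han) (by simp),
    ← EReal.coe_mul] at hn
  calc μ n C = EReal.exp (ENNReal.log (μ n C)) := (ENNReal.exp_log _).symm
    _ ≤ EReal.exp ((-(r - δ) * a n : ℝ) : EReal) := EReal.exp_monotone hn.le
    _ = _ := by rw [EReal.exp_coe, neg_mul, mul_comm]

lemma decayRateAtMost (h : SatisfiesLDP μ a I) (ha : ∀ᶠ n in atTop, 0 < a n) {O : Set ℝ}
    (hO : IsOpen O) {y : ℝ} (hy : y ∈ O) : DecayRateAtMost a (fun n => μ n O) (I y) :=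
  fun δ hδ => by
  have hlim : ((-(I y + δ) : ℝ) : EReal)
      < liminf (fun n => (((a n)⁻¹ : ℝ) : EReal) * ENNReal.log (μ n O)) atTop := by
    refine lt_of_lt_of_le ?_ (h.2 O hO)
    calc (((-(I y + δ)) : ℝ) : EReal) < -(I y : EReal) := by
          exact_mod_cast (by linarith : -(I y + δ) < -I y)
      _ ≤ -(⨅ z ∈ O, (I z : EReal)) := EReal.neg_le_neg_iff.2 (iInf₂_le y hy)
  filter_upwards [eventually_lt_of_lt_liminf hlim, ha] with n hn han
  rw [EReal.coe_inv_mul_eq_div, EReal.lt_div_iff (by exact_mod_cast han) (by simp),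
    ← EReal.coe_mul] at hn
  calc ENNReal.ofReal (Real.exp (-(a n * (I y + δ))))
      = EReal.exp ((-(I y + δ) * a n : ℝ) : EReal) := by rw [EReal.exp_coe, neg_mul, mul_comm]
    _ ≤ EReal.exp (ENNReal.log (μ n O)) := EReal.exp_monotone hn.le
    _ = μ n O := ENNReal.exp_log _

lemma decayRateAtMost_Ioi (h : SatisfiesLDP μ a I) (ha : ∀ᶠ n in atTop, 0 < a n) {q : ℝ}
    (hI : ContinuousAt I q) : DecayRateAtMost a (fun n => μ n (Ioi q)) (I q) := by
  refine DecayRateAtMost.of_forall_gt fun r' hr' => ?_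
  have hnear : ∀ᶠ y in 𝓝[>] q, I y < r' ∧ y ∈ Ioi q :=
    ((hI.mono_left nhdsWithin_le_nhds).eventually (gt_mem_nhds hr')).and self_mem_nhdsWithin
  obtain ⟨y, hyI, hy⟩ := hnear.exists
  exact (h.decayRateAtMost ha isOpen_Ioi hy).mono_rate (ha.mono fun _ => le_of_lt) hyI.le

end SatisfiesLDP

section Pushforward

variable {Ω : Type*} [MeasurableSpace Ω] {P : Measure Ω} {Z : ℕ → Ω → ℝ} {a : ℕ → ℝ} {A : ℝ}

lemma SatisfiesLDP.decayRateAtLeast_setOf_le (hZ : ∀ n, Measurable (Z n))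
    (h : SatisfiesLDP (fun n => P.map (Z n)) a fun z => A * z ^ 2 / 2)
    (ha : ∀ᶠ n in atTop, 0 < a n) (hA : 0 ≤ A) {v : ℝ} (hv : 0 ≤ v) :
    DecayRateAtLeast a (fun n => P {ω | v ≤ Z n ω}) (A * v ^ 2 / 2) := by
  have hC := h.decayRateAtLeast ha isClosed_Ici (r := A * v ^ 2 / 2) fun z (hz : v ≤ z) => by
    gcongr
  simp only [Measure.map_apply (hZ _) measurableSet_Ici] at hC
  exact hC

lemma SatisfiesLDP.decayRateAtMost_setOf_lt (hZ : ∀ n, Measurable (Z n))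
    (h : SatisfiesLDP (fun n => P.map (Z n)) a fun z => A * z ^ 2 / 2)
    (ha : ∀ᶠ n in atTop, 0 < a n) (s : ℝ) :
    DecayRateAtMost a (fun n => P {ω | s < Z n ω}) (A * s ^ 2 / 2) := by
  have hO := h.decayRateAtMost_Ioi ha (q := s) (by fun_prop)
  simp only [Measure.map_apply (hZ _) measurableSet_Ioi] at hO
  exact hO

end Pushforward

section Independence

variable {Ω : Type*} [MeasurableSpace Ω] {P : Measure Ω} {X Y : Ω → ℝ}

lemma ProbabilityTheory.IndepFun.measure_le_mul_measure_lt_le (h : IndepFun X Y P) (t s : ℝ) :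
    P {ω | t ≤ X ω} * P {ω | s < Y ω} ≤ P {ω | t + s ≤ X ω + Y ω} :=
  calc P {ω | t ≤ X ω} * P {ω | s < Y ω} = P (X ⁻¹' Ici t ∩ Y ⁻¹' Ioi s) :=
        (h.measure_inter_preimage_eq_mul _ _ measurableSet_Ici measurableSet_Ioi).symm
    _ ≤ _ := measure_mono fun ω ⟨hX, hY⟩ => by
        simp only [mem_preimage, mem_Ici, mem_Ioi] at hX hY
        exact add_le_add hX hY.le

lemma ProbabilityTheory.IndepFun.measure_strip_le (h : IndepFun X Y P) (t t' c : ℝ) :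
    P {ω | t ≤ X ω ∧ X ω < t' ∧ c ≤ X ω + Y ω} ≤ P {ω | t ≤ X ω} * P {ω | c - t' ≤ Y ω} :=
  calc P {ω | t ≤ X ω ∧ X ω < t' ∧ c ≤ X ω + Y ω} ≤ P (X ⁻¹' Ici t ∩ Y ⁻¹' Ici (c - t')) :=
        measure_mono fun ω ⟨hX, hX', hXY⟩ => ⟨hX, show c - t' ≤ Y ω by linarith⟩
    _ = _ := h.measure_inter_preimage_eq_mul _ _ measurableSet_Ici measurableSet_Ici

end Independence

lemma quadratic_rate_gap {lam β x ε t : ℝ} (hlamβ : lam < β) (hβ : 0 ≤ β) (hε : 0 ≤ ε)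
    (ht : t ≤ x) :
    lam * (β * x / (β - lam) + ε) ^ 2 / 2 + (β - lam) * ε ^ 2 / 2
      ≤ lam * β / (β - lam) * t ^ 2 / 2 + β * (β * x / (β - lam) + ε - t) ^ 2 / 2 := by
  have hd : 0 < β - lam := by linarith
  have key : lam * β / (β - lam) * t ^ 2 / 2 + β * (β * x / (β - lam) + ε - t) ^ 2 / 2
      - (lam * (β * x / (β - lam) + ε) ^ 2 / 2 + (β - lam) * ε ^ 2 / 2)
      = β ^ 2 / (β - lam) * (x - t) ^ 2 / 2 + β * ε * (x - t) := by
    field_simp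
    ring
  have : 0 ≤ β ^ 2 / (β - lam) * (x - t) ^ 2 / 2 + β * ε * (x - t) := by
    have := sub_nonneg.2 ht
    positivity
  linarith

lemma quadratic_rate_gap_of_le_add {lam β x ε t t' h : ℝ} (hlam : 0 ≤ lam) (hlamβ : lam < β)
    (hε : 0 ≤ ε) (ht : 0 ≤ t) (htt' : t ≤ t') (ht'h : t' ≤ t + h) (ht'x : t' ≤ x) :
    lam * (β * x / (β - lam) + ε) ^ 2 / 2 + (β - lam) * ε ^ 2 / 2 - lam * β / (β - lam) * x * h
      ≤ lam * β / (β - lam) * t ^ 2 / 2 + β * (β * x / (β - lam) + ε - t') ^ 2 / 2 := by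
  have hgap := quadratic_rate_gap hlamβ (by linarith) hε ht'x
  have hsq : t' ^ 2 - t ^ 2 ≤ 2 * x * h := by nlinarith
  have hγ : 0 ≤ lam * β / (β - lam) := div_nonneg (by nlinarith) (by linarith)
  nlinarith [mul_le_mul_of_nonneg_left hsq hγ]

lemma exists_nat_mul_le_lt {y h : ℝ} {m : ℕ} (hy : 0 ≤ y) (hym : y < m * h) :
    ∃ i < m, i * h ≤ y ∧ y < (i + 1) * h := by
  have hh : 0 < h := pos_of_mul_pos_right (hy.trans_lt hym) m.cast_nonneg
  have hyh : 0 ≤ y / h := div_nonneg hy hh.le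
  refine ⟨⌊y / h⌋₊, ?_, ?_, ?_⟩
  · rwa [Nat.floor_lt hyh, div_lt_iff₀ hh]
  · exact (le_div_iff₀ hh).1 (Nat.floor_le hyh)
  · exact (div_lt_iff₀ hh).1 (Nat.lt_floor_add_one _)

lemma measure_setOf_lt_and_le_add_sum {Ω : Type*} [MeasurableSpace Ω] (P : Measure Ω)
    (f : Ω → ℝ) (Q : Ω → Prop) (m : ℕ) (h : ℝ) :
    P {ω | f ω < m * h ∧ Q ω} ≤ P {ω | f ω < 0 ∧ Q ω}
      + ∑ i ∈ Finset.range m, P {ω | i * h ≤ f ω ∧ f ω < (i + 1) * h ∧ Q ω} := by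
  have hcover : {ω | f ω < m * h ∧ Q ω} ⊆ {ω | f ω < 0 ∧ Q ω}
      ∪ ⋃ i ∈ Finset.range m, {ω | i * h ≤ f ω ∧ f ω < (i + 1) * h ∧ Q ω} := by
    rintro ω ⟨hf, hQ⟩
    rcases lt_or_ge (f ω) 0 with hneg | hnonneg
    · exact Or.inl ⟨hneg, hQ⟩
    · obtain ⟨i, him, hi⟩ := exists_nat_mul_le_lt hnonneg hf
      exact Or.inr (mem_biUnion (Finset.mem_coe.2 (Finset.mem_range.2 him)) ⟨hi.1, hi.2, hQ⟩)
  calc _ ≤ _ := measure_mono hcover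
    _ ≤ _ := measure_union_le _ _
    _ ≤ _ := add_le_add le_rfl (measure_biUnion_finset_le _ _)

section LargeDeviations

variable {Ω : Type*} [MeasurableSpace Ω] {P : Measure Ω} {X Y : ℕ → Ω → ℝ} {a : ℕ → ℝ}
  {lam β : ℝ}

/-- `P(X ≥ t) P(Y > s) ≤ P(X + Y ≥ t + s)`, and `s = λt/(β-λ)` maximises the resulting
rate `λ(t+s)²/2 - βs²/2`. -/
lemma decayRateAtLeast_setOf_le_of_indepFun (hindep : ∀ n, IndepFun (X n) (Y n) P)
    (hS : ∀ u ≥ 0, DecayRateAtLeast a (fun n => P {ω | u ≤ X n ω + Y n ω}) (lam * u ^ 2 / 2))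
    (hY : ∀ s, DecayRateAtMost a (fun n => P {ω | s < Y n ω}) (β * s ^ 2 / 2))
    (hlam : 0 ≤ lam) (hlamβ : lam < β) {t : ℝ} (ht : 0 ≤ t) :
    DecayRateAtLeast a (fun n => P {ω | t ≤ X n ω}) (lam * β / (β - lam) * t ^ 2 / 2) := by
  have hd : 0 < β - lam := by linarith
  set s := lam * t / (β - lam) with hs
  have hprod := (hS (t + s) (add_nonneg ht (div_nonneg (mul_nonneg hlam ht) hd.le))).mono
    (Eventually.of_forall fun n => (hindep n).measure_le_mul_measure_lt_le t s)
  convert hprod.of_mul_le (hY s) using 1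
  rw [hs]
  field_simp
  ring

lemma decayRateAtLeast_setOf_lt_zero_and_le_add
    (hY : ∀ v ≥ 0, DecayRateAtLeast a (fun n => P {ω | v ≤ Y n ω}) (β * v ^ 2 / 2))
    {c : ℝ} (hc : 0 ≤ c) :
    DecayRateAtLeast a (fun n => P {ω | X n ω < 0 ∧ c ≤ X n ω + Y n ω}) (β * c ^ 2 / 2) :=
  (hY c hc).mono (Eventually.of_forall fun n => measure_mono fun ω ⟨hX, hXY⟩ =>
    show c ≤ Y n ω by linarith)

lemma decayRateAtLeast_setOf_strip (hindep : ∀ n, IndepFun (X n) (Y n) P)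
    (hS : ∀ u ≥ 0, DecayRateAtLeast a (fun n => P {ω | u ≤ X n ω + Y n ω}) (lam * u ^ 2 / 2))
    (hYup : ∀ v ≥ 0, DecayRateAtLeast a (fun n => P {ω | v ≤ Y n ω}) (β * v ^ 2 / 2))
    (hYlow : ∀ s, DecayRateAtMost a (fun n => P {ω | s < Y n ω}) (β * s ^ 2 / 2))
    (hlam : 0 ≤ lam) (hlamβ : lam < β) {t t' c : ℝ} (ht : 0 ≤ t) (ht' : t' ≤ c) :
    DecayRateAtLeast a (fun n => P {ω | t ≤ X n ω ∧ X n ω < t' ∧ c ≤ X n ω + Y n ω})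
      (lam * β / (β - lam) * t ^ 2 / 2 + β * (c - t') ^ 2 / 2) :=
  ((decayRateAtLeast_setOf_le_of_indepFun hindep hS hYlow hlam hlamβ ht).mul
    (hYup (c - t') (sub_nonneg.2 ht'))).mono
    (Eventually.of_forall fun n => (hindep n).measure_strip_le t t' c)

lemma decayRateAtLeast_setOf_lt_and_le_add (ha : Tendsto a atTop atTop)
    (hindep : ∀ n, IndepFun (X n) (Y n) P)
    (hS : ∀ u ≥ 0, DecayRateAtLeast a (fun n => P {ω | u ≤ X n ω + Y n ω}) (lam * u ^ 2 / 2))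
    (hYup : ∀ v ≥ 0, DecayRateAtLeast a (fun n => P {ω | v ≤ Y n ω}) (β * v ^ 2 / 2))
    (hYlow : ∀ s, DecayRateAtMost a (fun n => P {ω | s < Y n ω}) (β * s ^ 2 / 2))
    (hlam : 0 ≤ lam) (hlamβ : lam < β) {x ε : ℝ} (hx : 0 ≤ x) (hε : 0 < ε) :
    DecayRateAtLeast a
      (fun n => P {ω | X n ω < x ∧ β * x / (β - lam) + ε ≤ X n ω + Y n ω})
      (lam * (β * x / (β - lam) + ε) ^ 2 / 2 + (β - lam) * ε ^ 2 / 4) := by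
  have hd : 0 < β - lam := by linarith
  set c := β * x / (β - lam) + ε
  set γ := lam * β / (β - lam)
  have hγ : 0 ≤ γ := div_nonneg (mul_nonneg hlam (by linarith)) hd.le
  have hxx₀ : x ≤ β * x / (β - lam) := by rw [le_div_iff₀ hd]; nlinarith
  have hxc : x ≤ c := by linarith
  have hεc : ε ≤ c := by linarith
  have ha0 : ∀ᶠ n in atTop, 0 ≤ a n := ha.eventually_ge_atTop 0
  obtain ⟨m, hm⟩ := exists_nat_gt (4 * γ * x ^ 2 / ((β - lam) * ε ^ 2))
  have hm0 : (0 : ℝ) < m := lt_of_le_of_lt (by positivity) hm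
  set h := x / m
  have hmh : (m : ℝ) * h = x := mul_div_cancel₀ x hm0.ne'
  have hmesh : γ * x * h ≤ (β - lam) * ε ^ 2 / 4 := by
    rw [div_lt_iff₀ (mul_pos hd (pow_pos hε 2))] at hm
    rw [mul_div_assoc', div_le_iff₀ hm0]
    nlinarith
  have hneg := (decayRateAtLeast_setOf_lt_zero_and_le_add (X := X) hYup (c := c)
    (by linarith)).mono_rate ha0 (r' := lam * c ^ 2 / 2 + (β - lam) * ε ^ 2 / 4)
    (by nlinarith [mul_le_mul hεc hεc hε.le (by linarith)])
  have hstrip : ∀ i ∈ Finset.range m, DecayRateAtLeast a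
      (fun n => P {ω | i * h ≤ X n ω ∧ X n ω < (i + 1) * h ∧ c ≤ X n ω + Y n ω})
      (lam * c ^ 2 / 2 + (β - lam) * ε ^ 2 / 4) := by
    intro i hi
    have hi1 : ((i : ℝ) + 1) * h ≤ x := by
      have : (i : ℝ) + 1 ≤ m := by exact_mod_cast Finset.mem_range.1 hi
      calc ((i : ℝ) + 1) * h ≤ m * h := by gcongr
        _ = x := hmh
    refine (decayRateAtLeast_setOf_strip hindep hS hYup hYlow hlam hlamβ (by positivity)
      (hi1.trans hxc)).mono_rate ha0 ?_
    have := quadratic_rate_gap_of_le_add hlam hlamβ hε.le (t := i * h) (h := h) (by positivity)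
      (by nlinarith) (by linarith [add_mul (i : ℝ) 1 h]) hi1
    linarith
  have hcover : ∀ n, P {ω | X n ω < x ∧ c ≤ X n ω + Y n ω}
      ≤ P {ω | X n ω < 0 ∧ c ≤ X n ω + Y n ω} + ∑ i ∈ Finset.range m,
        P {ω | i * h ≤ X n ω ∧ X n ω < (i + 1) * h ∧ c ≤ X n ω + Y n ω} := fun n => by
    rw [← hmh]
    exact measure_setOf_lt_and_le_add_sum P (X n) (fun ω => c ≤ X n ω + Y n ω) m h
  exact (hneg.add ha (.finset_sum ha _ hstrip)).mono (Eventually.of_forall hcover)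

end LargeDeviations

theorem stmt9_general {Ω : Type*} [MeasurableSpace Ω] (P : Measure Ω)
    (X Y : ℕ → Ω → ℝ) (hX : ∀ n, Measurable (X n)) (hY : ∀ n, Measurable (Y n))
    (hindep : ∀ n, IndepFun (X n) (Y n) P)
    (a : ℕ → ℝ) (ha' : Tendsto a atTop atTop)
    (lam β : ℝ) (hlam : 0 < lam) (hlamβ : lam < β)
    (J K : ℝ → ℝ)
    (hJ : J = fun x => lam * x ^ 2 / 2)
    (hK : K = fun x => β * x ^ 2 / 2)
    (hLDPY : SatisfiesLDP (fun n => P.map (Y n)) a K)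
    (hLDPXY : SatisfiesLDP (fun n => P.map (fun ω => X n ω + Y n ω)) a J)
    (x : ℝ) (hx : 0 ≤ x) (ε : ℝ) (hε : 0 < ε)
    (x₀ : ℝ) (hx₀ : x₀ = β * x / (β - lam)) :
    (∀ᶠ n in atTop, 0 < P {ω | x₀ + ε ≤ X n ω + Y n ω}) ∧
    Tendsto
      (fun n =>
        P {ω | X n ω < x ∧ x₀ + ε ≤ X n ω + Y n ω} /
          P {ω | x₀ + ε ≤ X n ω + Y n ω})
      atTop (nhds 0) := by
  subst hJ hK hx₀
  have ha : ∀ᶠ n in atTop, 0 < a n := ha'.eventually_gt_atTop 0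
  have hS : ∀ n, Measurable fun ω => X n ω + Y n ω := fun n => (hX n).add (hY n)
  have hden : DecayRateAtMost a (fun n => P {ω | β * x / (β - lam) + ε ≤ X n ω + Y n ω})
      (lam * (β * x / (β - lam) + ε) ^ 2 / 2) :=
    (hLDPXY.decayRateAtMost_setOf_lt hS ha _).mono
      (Eventually.of_forall fun n => measure_mono (ofPred_subset_ofPred.2 fun _ => le_of_lt))
  have hnum := decayRateAtLeast_setOf_lt_and_le_add ha' hindep
    (fun u hu => hLDPXY.decayRateAtLeast_setOf_le hS ha hlam.le hu)
    (fun v hv => hLDPY.decayRateAtLeast_setOf_le hY ha (by linarith) hv)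
    (hLDPY.decayRateAtMost_setOf_lt hY ha) hlam.le hlamβ hx hε
  have hgap : 0 < (β - lam) * ε ^ 2 / 4 := by
    have := sub_pos.2 hlamβ
    positivity
  exact ⟨hden.eventually_pos, hnum.tendsto_div_zero ha' hden (by linarith)⟩

/-- Under LDPs for the laws of `Y_n` (rate `K x = βx²/2`) and of
`X_n + Y_n` (rate `J x = λx²/2`), with `X_n, Y_n` independent, `a_n → ∞` positive,
`0 < λ < β`, `x ≥ 0`, `ε > 0` and `x₀ = βx/(β−λ)`: the conditional probability
`P(X_n < x and X_n + Y_n ≥ x₀ + ε) / P(X_n + Y_n ≥ x₀ + ε)` tends to `0`, the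
denominator being strictly positive for all sufficiently large `n`. -/
theorem stmt9 {Ω : Type*} [MeasurableSpace Ω] (P : Measure Ω) [IsProbabilityMeasure P]
    (X Y : ℕ → Ω → ℝ) (hX : ∀ n, Measurable (X n)) (hY : ∀ n, Measurable (Y n))
    (hindep : ∀ n, IndepFun (X n) (Y n) P)
    (a : ℕ → ℝ) (ha : ∀ n, 0 < a n) (ha' : Tendsto a atTop atTop)
    (lam β : ℝ) (hlam : 0 < lam) (hlamβ : lam < β)
    (J K : ℝ → ℝ)
    (hJ : J = fun x => lam * x ^ 2 / 2)
    (hK : K = fun x => β * x ^ 2 / 2)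
    (hLDPY : SatisfiesLDP (fun n => P.map (Y n)) a K)
    (hLDPXY : SatisfiesLDP (fun n => P.map (fun ω => X n ω + Y n ω)) a J)
    (x : ℝ) (hx : 0 ≤ x) (ε : ℝ) (hε : 0 < ε)
    (x₀ : ℝ) (hx₀ : x₀ = β * x / (β - lam)) :
    (∀ᶠ n in atTop, 0 < P {ω | x₀ + ε ≤ X n ω + Y n ω}) ∧
    Tendsto
      (fun n =>
        P {ω | X n ω < x ∧ x₀ + ε ≤ X n ω + Y n ω} /
          P {ω | x₀ + ε ≤ X n ω + Y n ω})
      atTop (nhds 0) :=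
  stmt9_general P X Y hX hY hindep a ha' lam β hlam hlamβ J K hJ hK hLDPY hLDPXY x hx ε hε x₀ hx₀
end

section
/- Let (Ω, F, P) be a probability space, let (X_n) and (Y_n) be sequences of real-valued random variables on Ω such that X_n and Y_n are independent for each n, let (a_n) be positive reals with a_n → ∞, and let 0 < λ < β. Set J(x) = λx²/2, K(x) = βx²/2. Assume the laws of Y_n satisfy the LDP with speed (a_n) and rate function K, and the laws of X_n + Y_n satisfy the LDP with speed (a_n) and rate function J. Fix x ≥ 0 and ε > 0, and set x₀ = βx/(β−λ). Then lim_{n→∞} P(Y_n < x₀ − x and X_n + Y_n ≥ x₀ + ε) / P(X_n + Y_n ≥ x₀ + ε) = 0 (the denominator being strictly positive for all sufficiently large n). -/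
open MeasureTheory ProbabilityTheory Filter Set

/-!
Independence turns the LDPs for `Y_n` and `X_n + Y_n` into an exponential bound on the tail of
`X_n`: from `P(X_n ≥ m) P(Y_n > s) ≤ P(X_n + Y_n ≥ m + s)`, optimising in `s`, the rate of
`P(X_n ≥ m)` is at least `κ m² / 2` with `κ = λβ / (β - λ)`. Cutting the event
`{Y_n < x₀ - x, X_n + Y_n ≥ c}`, `c = x₀ + ε`, into finitely many rectangles along a fine grid in
`Y_n`, its rate is at least the minimum of `β y² / 2 + κ (c - y)² / 2` over `0 ≤ y ≤ x₀ - x`, up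
to the mesh. Over all `y` this minimum is `λ c² / 2`, the rate of the denominator, attained at
`y = λ c / β`; the choice of `x₀` puts that point `λ ε / β` to the right of `x₀ - x`, which leaves
a gap `λ² ε² / (2 (β - λ))` and makes the ratio decay exponentially.
-/

open scoped ENNReal Topology

noncomputable def scaledLog (a : ℕ → ℝ) (p : ℕ → ℝ≥0∞) (n : ℕ) : EReal :=
  ((a n)⁻¹ : ℝ) * ENNReal.log (p n)

section ScaledLog

variable {a : ℕ → ℝ} {p q r : ℕ → ℝ≥0∞} {n : ℕ}

lemma scaledLog_mono (han : 0 ≤ a n) (h : p n ≤ q n) : scaledLog a p n ≤ scaledLog a q n :=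
  mul_le_mul_of_nonneg_left (ENNReal.log_monotone h) (EReal.coe_nonneg.2 (inv_nonneg.2 han))

lemma scaledLog_mul (han : 0 ≤ a n) :
    scaledLog a (p * q) n = scaledLog a p n + scaledLog a q n :=
  (congrArg _ ENNReal.log_mul_add).trans <| EReal.left_distrib_of_nonneg_of_ne_top
    (EReal.coe_nonneg.2 (inv_nonneg.2 han)) (EReal.coe_ne_top _) _ _

lemma scaledLog_div (han : 0 ≤ a n) :
    scaledLog a (p / q) n = scaledLog a p n - scaledLog a q n := by
  rw [div_eq_mul_inv, scaledLog_mul han, sub_eq_add_neg]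
  simp only [scaledLog, Pi.inv_apply, ENNReal.log_inv, mul_neg]

lemma scaledLog_max (han : 0 ≤ a n) :
    scaledLog a (p ⊔ q) n = max (scaledLog a p n) (scaledLog a q n) :=
  Monotone.map_max (f := fun t => (((a n)⁻¹ : ℝ) : EReal) * ENNReal.log t)
    fun _ _ h => mul_le_mul_of_nonneg_left (ENNReal.log_monotone h)
      (EReal.coe_nonneg.2 (inv_nonneg.2 han))

lemma scaledLog_zero (han : 0 < a n) : scaledLog a (fun _ => 0) n = ⊥ := by
  simp only [scaledLog, ENNReal.log_zero, EReal.coe_mul_bot_of_pos (inv_pos.2 han)]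

lemma tendsto_scaledLog_const (ha : Tendsto a atTop atTop) {c : ℝ≥0∞} (hc₀ : c ≠ 0)
    (hc : c ≠ ∞) : Tendsto (scaledLog a fun _ => c) atTop (𝓝 0) := by
  have h : scaledLog a (fun _ => c) = fun n => (((a n)⁻¹ * Real.log c.toReal : ℝ) : EReal) := by
    ext n
    rw [scaledLog, ENNReal.log_pos_real hc₀ hc, EReal.coe_mul]
  rw [h]
  simpa using EReal.tendsto_coe.2 ((tendsto_inv_atTop_zero.comp ha).mul_const (Real.log c.toReal))

lemma limsup_scaledLog_add_le (ha : Tendsto a atTop atTop) {L : ℝ}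
    (hp : limsup (scaledLog a p) atTop ≤ L) (hq : limsup (scaledLog a q) atTop ≤ L) :
    limsup (scaledLog a (p + q)) atTop ≤ L := by
  have h2 := tendsto_scaledLog_const ha (c := 2) (by simp) (by simp)
  calc limsup (scaledLog a (p + q)) atTop
      ≤ limsup (scaledLog a (fun _ => 2) + scaledLog a (p ⊔ q)) atTop := by
        refine limsup_le_limsup ((ha.eventually_gt_atTop 0).mono fun n han => ?_)
        rw [Pi.add_apply, ← scaledLog_mul han.le]
        refine scaledLog_mono han.le ?_
        rw [Pi.add_apply, Pi.mul_apply, two_mul]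
        exact add_le_add le_sup_left le_sup_right
    _ ≤ limsup (scaledLog a fun _ => 2) atTop + limsup (scaledLog a (p ⊔ q)) atTop :=
        EReal.limsup_add_le (.inl (by simp [h2.limsup_eq])) (.inl (by simp [h2.limsup_eq]))
    _ = limsup (fun n => max (scaledLog a p n) (scaledLog a q n)) atTop := by
        rw [h2.limsup_eq, zero_add]
        exact limsup_congr ((ha.eventually_gt_atTop 0).mono fun n han => scaledLog_max han.le)
    _ ≤ L := by rw [limsup_max]; exact max_le hp hq

lemma limsup_scaledLog_sum_le (ha : Tendsto a atTop atTop) {ι : Type*} (s : Finset ι)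
    {f : ι → ℕ → ℝ≥0∞} {L : ℝ} (hf : ∀ i ∈ s, limsup (scaledLog a (f i)) atTop ≤ L) :
    limsup (scaledLog a fun n => ∑ i ∈ s, f i n) atTop ≤ L := by
  classical
  induction s using Finset.induction_on with
  | empty =>
    have h : ∀ᶠ n in atTop, scaledLog a (fun n => ∑ i ∈ (∅ : Finset ι), f i n) n = ⊥ :=
      (ha.eventually_gt_atTop 0).mono fun n han => by
        simpa only [Finset.sum_empty] using scaledLog_zero han
    rw [limsup_congr h, limsup_const]
    exact bot_le
  | insert i s hi ih =>
    simp only [Finset.sum_insert hi]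
    exact limsup_scaledLog_add_le ha (hf i (s.mem_insert_self i))
      (ih fun j hj => hf j (Finset.mem_insert_of_mem hj))

lemma limsup_scaledLog_mul_le (ha : Tendsto a atTop atTop) {L M : ℝ}
    (hp : limsup (scaledLog a p) atTop ≤ L) (hq : limsup (scaledLog a q) atTop ≤ M) :
    limsup (scaledLog a (p * q)) atTop ≤ ((L + M : ℝ) : EReal) := by
  rw [limsup_congr ((ha.eventually_gt_atTop 0).mono fun n han => scaledLog_mul han.le),
    EReal.coe_add]
  exact (EReal.limsup_add_le (.inr (hq.trans_lt (EReal.coe_lt_top M)).ne)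
    (.inl (hp.trans_lt (EReal.coe_lt_top L)).ne)).trans (add_le_add hp hq)

lemma limsup_scaledLog_div_le (ha : Tendsto a atTop atTop) {L M : ℝ}
    (hp : limsup (scaledLog a p) atTop ≤ L) (hq : (M : EReal) ≤ liminf (scaledLog a q) atTop) :
    limsup (scaledLog a (p / q)) atTop ≤ ((L - M : ℝ) : EReal) := by
  have hq' : limsup (-scaledLog a q) atTop ≤ ((-M : ℝ) : EReal) := by
    rw [EReal.limsup_neg, EReal.coe_neg]
    exact EReal.neg_le_neg_iff.2 hq
  rw [limsup_congr ((ha.eventually_gt_atTop 0).mono fun n han => scaledLog_div han.le),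
    sub_eq_add_neg L, EReal.coe_add]
  exact (EReal.limsup_add_le (.inr (hq'.trans_lt (EReal.coe_lt_top _)).ne)
    (.inl (hp.trans_lt (EReal.coe_lt_top L)).ne)).trans (add_le_add hp hq')

lemma limsup_scaledLog_le_of_mul_le (ha : Tendsto a atTop atTop) {L M : ℝ}
    (h : ∀ᶠ n in atTop, p n * q n ≤ r n) (hr : limsup (scaledLog a r) atTop ≤ L)
    (hq : (M : EReal) ≤ liminf (scaledLog a q) atTop) :
    limsup (scaledLog a p) atTop ≤ ((L - M : ℝ) : EReal) := by
  rw [EReal.coe_sub, EReal.le_sub_iff_add_le (.inl (EReal.coe_ne_bot M))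
    (.inl (EReal.coe_ne_top M))]
  calc limsup (scaledLog a p) atTop + M
      ≤ limsup (scaledLog a p) atTop + liminf (scaledLog a q) atTop := add_le_add_right hq _
    _ ≤ limsup (scaledLog a p + scaledLog a q) atTop := EReal.le_limsup_add
    _ ≤ limsup (scaledLog a r) atTop := by
        refine limsup_le_limsup ((h.and (ha.eventually_gt_atTop 0)).mono fun n ⟨hn, han⟩ => ?_)
        rw [Pi.add_apply, ← scaledLog_mul han.le]
        exact scaledLog_mono han.le hn
    _ ≤ L := hr

lemma eventually_pos_of_le_liminf_scaledLog (ha : Tendsto a atTop atTop) {M : ℝ}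
    (h : (M : EReal) ≤ liminf (scaledLog a p) atTop) : ∀ᶠ n in atTop, 0 < p n := by
  have hlt : ((M - 1 : ℝ) : EReal) < liminf (scaledLog a p) atTop :=
    (EReal.coe_lt_coe_iff.2 (sub_one_lt M)).trans_le h
  filter_upwards [eventually_lt_of_lt_liminf hlt, ha.eventually_gt_atTop 0] with n hn han
  refine pos_iff_ne_zero.2 fun h0 => ?_
  rw [scaledLog, h0, ENNReal.log_zero, EReal.coe_mul_bot_of_pos (inv_pos.2 han)] at hn
  exact not_lt_bot hn

lemma tendsto_zero_of_limsup_scaledLog_neg (ha : Tendsto a atTop atTop)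
    (h : limsup (scaledLog a p) atTop < 0) : Tendsto p atTop (𝓝 0) := by
  obtain ⟨r, hr, hr0⟩ := EReal.lt_iff_exists_real_btwn.1 h
  have hlog : Tendsto (fun n => ENNReal.log (p n)) atTop (𝓝 ⊥) := by
    have hra : Tendsto (fun n => r * a n) atTop atBot :=
      ha.const_mul_atTop_of_neg (EReal.coe_lt_coe_iff.1 hr0)
    refine tendsto_nhds_bot_mono (EReal.tendsto_coe_nhds_bot_iff.2 hra) ?_
    filter_upwards [eventually_lt_of_limsup_lt hr, ha.eventually_gt_atTop 0] with n hn han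
    calc ENNReal.log (p n) = (a n : EReal) * scaledLog a p n := by
          rw [scaledLog, ← mul_assoc, ← EReal.coe_mul, mul_inv_cancel₀ han.ne', EReal.coe_one,
            one_mul]
      _ ≤ (a n : EReal) * r := mul_le_mul_of_nonneg_left hn.le (EReal.coe_nonneg.2 han.le)
      _ = ((r * a n : ℝ) : EReal) := by rw [EReal.coe_mul, mul_comm]
  simpa [Function.comp_def, ENNReal.exp_log] using (ENNReal.continuous_exp.tendsto ⊥).comp hlog

end ScaledLog

section LDP

variable {μ : ℕ → Measure ℝ} {a : ℕ → ℝ} {I : ℝ → ℝ}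

lemma SatisfiesLDP.limsup_scaledLog_le (h : SatisfiesLDP μ a I) {C : Set ℝ} (hC : IsClosed C)
    {b : ℝ} (hb : ∀ y ∈ C, b ≤ I y) :
    limsup (scaledLog a fun n => μ n C) atTop ≤ ((-b : ℝ) : EReal) := by
  refine (h.1 C hC).trans ?_
  rw [EReal.coe_neg]
  exact EReal.neg_le_neg_iff.2 (le_iInf₂ fun y hy => EReal.coe_le_coe_iff.2 (hb y hy))

lemma SatisfiesLDP.le_liminf_scaledLog (h : SatisfiesLDP μ a I) {O : Set ℝ} (hO : IsOpen O)
    {y : ℝ} (hy : y ∈ closure O) (hI : ContinuousAt I y) :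
    ((-I y : ℝ) : EReal) ≤ liminf (scaledLog a fun n => μ n O) atTop := by
  have : (𝓝[O] y).NeBot := mem_closure_iff_nhdsWithin_neBot.1 hy
  refine le_of_tendsto (x := 𝓝[O] y)
    (EReal.tendsto_coe.2 (hI.tendsto.mono_left nhdsWithin_le_nhds).neg) ?_
  filter_upwards [self_mem_nhdsWithin] with z hz
  refine le_trans ?_ (h.2 O hO)
  rw [EReal.coe_neg]
  exact EReal.neg_le_neg_iff.2 (iInf₂_le z hz)

lemma sq_max_zero_le_sq {m y : ℝ} (h : m ≤ y) : max m 0 ^ 2 ≤ y ^ 2 := by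
  rcases le_total m 0 with hm | hm
  · rw [max_eq_right hm, zero_pow two_ne_zero]; positivity
  · rw [max_eq_left hm]; nlinarith

variable {γ : ℝ}

lemma SatisfiesLDP.limsup_scaledLog_Ici_le_of_sq (h : SatisfiesLDP μ a fun y => γ * y ^ 2 / 2)
    (hγ : 0 ≤ γ) (m : ℝ) :
    limsup (scaledLog a fun n => μ n (Ici m)) atTop ≤ ((-(γ * max m 0 ^ 2 / 2) : ℝ) : EReal) :=
  h.limsup_scaledLog_le isClosed_Ici fun _ hy => by nlinarith [sq_max_zero_le_sq hy]

lemma SatisfiesLDP.le_liminf_scaledLog_Ioi_of_sq (h : SatisfiesLDP μ a fun y => γ * y ^ 2 / 2)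
    (m : ℝ) :
    ((-(γ * m ^ 2 / 2) : ℝ) : EReal) ≤ liminf (scaledLog a fun n => μ n (Ioi m)) atTop :=
  h.le_liminf_scaledLog isOpen_Ioi (by rw [closure_Ioi]; exact self_mem_Ici) (by fun_prop)

end LDP

lemma scaledLog_map {Ω : Type*} [MeasurableSpace Ω] {P : Measure Ω} {Z : ℕ → Ω → ℝ}
    (hZ : ∀ n, Measurable (Z n)) (a : ℕ → ℝ) {C : Set ℝ} (hC : MeasurableSet C) :
    (scaledLog a fun n => P.map (Z n) C) = scaledLog a fun n => P (Z n ⁻¹' C) := by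
  simp only [Measure.map_apply (hZ _) hC]

lemma sq_sub_two_mul_le_max_sub_zero_sq {y h : ℝ} (hy : 0 ≤ y) (hh : 0 ≤ h) :
    y ^ 2 - 2 * h * y ≤ max (y - h) 0 ^ 2 := by
  rcases le_total h y with hhy | hyh
  · rw [max_eq_left (sub_nonneg.2 hhy)]; nlinarith
  · rw [max_eq_right (sub_nonpos.2 hyh)]; nlinarith

lemma exists_mem_range_floor_sub_nat_mul_lt {u h y : ℝ} (hh : 0 < h) (hy : 0 ≤ y) (hyu : y ≤ u) :
    ∃ i ∈ Finset.range (⌊u / h⌋₊ + 1), u - i * h - h < y ∧ y ≤ u - i * h := by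
  refine ⟨⌊(u - y) / h⌋₊, Finset.mem_range_succ_iff.2 (Nat.floor_le_floor
    (div_le_div_of_nonneg_right (by linarith) hh.le)), ?_, ?_⟩
  · have := Nat.lt_floor_add_one ((u - y) / h)
    rw [div_lt_iff₀ hh] at this
    linarith
  · have := Nat.floor_le (div_nonneg (sub_nonneg.2 hyu) hh.le)
    rw [le_div_iff₀ hh] at this
    linarith

lemma sub_nat_mul_nonneg_of_mem_range_floor {u h : ℝ} (hu : 0 ≤ u) (hh : 0 < h) {i : ℕ}
    (hi : i ∈ Finset.range (⌊u / h⌋₊ + 1)) : 0 ≤ u - i * h := by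
  have := (Nat.cast_le.2 (Finset.mem_range_succ_iff.1 hi)).trans
    (Nat.floor_le (div_nonneg hu hh.le))
  rw [le_div_iff₀ hh] at this
  linarith

/-- `{X ≥ c}` takes care of `Y < 0`; otherwise `Y ∈ (y - h, y]` for a grid point `y = u - i h`. -/
lemma measure_lt_and_le_add_le_le {Ω : Type*} [MeasurableSpace Ω] {P : Measure Ω}
    (X Y : Ω → ℝ) {u c h : ℝ} (hh : 0 < h) :
    P {ω | Y ω < u ∧ c ≤ X ω + Y ω} ≤ P (X ⁻¹' Ici c)
      + ∑ i ∈ Finset.range (⌊u / h⌋₊ + 1),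
          P (Y ⁻¹' Ici (u - i * h - h) ∩ X ⁻¹' Ici (c - (u - i * h))) := by
  refine (measure_mono ?_).trans ((measure_union_le _ _).trans
    (add_le_add_right (measure_biUnion_finset_le _ _) _))
  rintro ω ⟨hYu, hXY⟩
  rcases lt_or_ge (Y ω) 0 with hneg | hnonneg
  · left
    simp only [mem_preimage, mem_Ici]
    linarith
  · obtain ⟨i, hi, hlo, hhi⟩ := exists_mem_range_floor_sub_nat_mul_lt hh hnonneg hYu.le
    right
    refine mem_biUnion hi ⟨hlo.le, ?_⟩
    simp only [mem_preimage, mem_Ici]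
    linarith

lemma add_le_sq_add_sq_of_mul_le {lam β ε c y : ℝ} (hlam : 0 ≤ lam) (hlamβ : lam < β)
    (hε : 0 ≤ ε) (hy : β * y ≤ lam * (c - ε)) :
    lam * c ^ 2 / 2 + lam ^ 2 * ε ^ 2 / (2 * (β - lam))
      ≤ β * y ^ 2 / 2 + lam * β / (β - lam) * (c - y) ^ 2 / 2 := by
  have hβl : 0 < β - lam := sub_pos.2 hlamβ
  have hsq : β * y ^ 2 / 2 + lam * β / (β - lam) * (c - y) ^ 2 / 2
      = lam * c ^ 2 / 2 + (lam * c - β * y) ^ 2 / (2 * (β - lam)) := by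
    field_simp
    ring
  have hgap : (lam * ε) ^ 2 ≤ (lam * c - β * y) ^ 2 :=
    pow_le_pow_left₀ (by positivity) (by linarith) 2
  rw [hsq, ← mul_pow]
  gcongr

section Tails

variable {Ω : Type*} [MeasurableSpace Ω] {P : Measure Ω} {X Y : ℕ → Ω → ℝ} {a : ℕ → ℝ}
  {lam β : ℝ}

lemma limsup_scaledLog_Ici_le_of_indepFun (hX : ∀ n, Measurable (X n))
    (hY : ∀ n, Measurable (Y n)) (hindep : ∀ n, IndepFun (X n) (Y n) P)
    (ha : Tendsto a atTop atTop) (hlam : 0 ≤ lam) (hlamβ : lam < β)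
    (hLDPY : SatisfiesLDP (fun n => P.map (Y n)) a fun y => β * y ^ 2 / 2)
    (hLDPXY : SatisfiesLDP (fun n => P.map fun ω => X n ω + Y n ω) a fun y => lam * y ^ 2 / 2)
    {m : ℝ} (hm : 0 ≤ m) :
    limsup (scaledLog a fun n => P (X n ⁻¹' Ici m)) atTop
      ≤ ((-(lam * β / (β - lam) * m ^ 2 / 2) : ℝ) : EReal) := by
  have hβl : 0 < β - lam := sub_pos.2 hlamβ
  set s := lam * m / (β - lam) with hs_def
  have hs : 0 ≤ s := by positivity
  have hprod : ∀ n, P (X n ⁻¹' Ici m) * P (Y n ⁻¹' Ioi s)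
      ≤ P ((fun ω => X n ω + Y n ω) ⁻¹' Ici (m + s)) := by
    intro n
    rw [← (hindep n).measure_inter_preimage_eq_mul _ _ measurableSet_Ici measurableSet_Ioi]
    refine measure_mono fun ω ⟨hXω, hYω⟩ => ?_
    simp only [mem_preimage, mem_Ici, mem_Ioi] at hXω hYω ⊢
    linarith
  have hsum := hLDPXY.limsup_scaledLog_Ici_le_of_sq hlam (m + s)
  rw [scaledLog_map (Z := fun n ω => X n ω + Y n ω) (fun n => (hX n).add (hY n)) a
    measurableSet_Ici] at hsum
  have hYs := hLDPY.le_liminf_scaledLog_Ioi_of_sq s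
  rw [scaledLog_map hY a measurableSet_Ioi] at hYs
  refine (limsup_scaledLog_le_of_mul_le ha (Eventually.of_forall hprod) hsum hYs).trans_eq ?_
  rw [max_eq_left (by positivity), hs_def]
  congr 1
  field_simp
  ring

lemma limsup_scaledLog_Ici_inter_Ici_le (hX : ∀ n, Measurable (X n))
    (hY : ∀ n, Measurable (Y n)) (hindep : ∀ n, IndepFun (X n) (Y n) P)
    (ha : Tendsto a atTop atTop) (hlam : 0 ≤ lam) (hlamβ : lam < β)
    (hLDPY : SatisfiesLDP (fun n => P.map (Y n)) a fun y => β * y ^ 2 / 2)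
    (hLDPXY : SatisfiesLDP (fun n => P.map fun ω => X n ω + Y n ω) a fun y => lam * y ^ 2 / 2)
    (ℓ : ℝ) {m : ℝ} (hm : 0 ≤ m) :
    limsup (scaledLog a fun n => P (Y n ⁻¹' Ici ℓ ∩ X n ⁻¹' Ici m)) atTop
      ≤ ((-(β * max ℓ 0 ^ 2 / 2) + -(lam * β / (β - lam) * m ^ 2 / 2) : ℝ) : EReal) := by
  have hYℓ := hLDPY.limsup_scaledLog_Ici_le_of_sq (hlam.trans hlamβ.le) ℓ
  rw [scaledLog_map hY a measurableSet_Ici] at hYℓ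
  have hprod : (fun n => P (Y n ⁻¹' Ici ℓ ∩ X n ⁻¹' Ici m))
      = (fun n => P (Y n ⁻¹' Ici ℓ)) * fun n => P (X n ⁻¹' Ici m) := by
    ext n
    exact (hindep n).symm.measure_inter_preimage_eq_mul _ _ measurableSet_Ici measurableSet_Ici
  rw [hprod]
  exact limsup_scaledLog_mul_le ha hYℓ
    (limsup_scaledLog_Ici_le_of_indepFun hX hY hindep ha hlam hlamβ hLDPY hLDPXY hm)

lemma limsup_scaledLog_lt_and_le_add_le (hX : ∀ n, Measurable (X n))
    (hY : ∀ n, Measurable (Y n)) (hindep : ∀ n, IndepFun (X n) (Y n) P)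
    (ha : Tendsto a atTop atTop) (hlam : 0 ≤ lam) (hlamβ : lam < β)
    (hLDPY : SatisfiesLDP (fun n => P.map (Y n)) a fun y => β * y ^ 2 / 2)
    (hLDPXY : SatisfiesLDP (fun n => P.map fun ω => X n ω + Y n ω) a fun y => lam * y ^ 2 / 2)
    {u c G h : ℝ} (hu : 0 ≤ u) (huc : u ≤ c) (hh : 0 < h) (hhG : 2 * β * u * h ≤ G)
    (hgap : ∀ y ∈ Icc 0 u,
      lam * c ^ 2 / 2 + G ≤ β * y ^ 2 / 2 + lam * β / (β - lam) * (c - y) ^ 2 / 2) :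
    limsup (scaledLog a fun n => P {ω | Y n ω < u ∧ c ≤ X n ω + Y n ω}) atTop
      ≤ ((-(lam * c ^ 2 / 2 + G / 2) : ℝ) : EReal) := by
  have hβ : 0 ≤ β := hlam.trans hlamβ.le
  have hcell : ∀ y ∈ Icc 0 u, -(β * max (y - h) 0 ^ 2 / 2)
      + -(lam * β / (β - lam) * (c - y) ^ 2 / 2) ≤ -(lam * c ^ 2 / 2 + G / 2) := by
    rintro y ⟨hy0, hyu⟩
    have hmax := mul_le_mul_of_nonneg_left (sq_sub_two_mul_le_max_sub_zero_sq hy0 hh.le) hβ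
    have hyh : β * h * y ≤ β * h * u := mul_le_mul_of_nonneg_left hyu (by positivity)
    nlinarith [hgap y ⟨hy0, hyu⟩]
  have hXc : limsup (scaledLog a fun n => P (X n ⁻¹' Ici c)) atTop
      ≤ ((-(lam * c ^ 2 / 2 + G / 2) : ℝ) : EReal) := by
    refine (limsup_scaledLog_Ici_le_of_indepFun hX hY hindep ha hlam hlamβ hLDPY hLDPXY
      (hu.trans huc)).trans (EReal.coe_le_coe_iff.2 ?_)
    simpa [hh.le] using hcell 0 ⟨le_rfl, hu⟩
  have hcells : ∀ i ∈ Finset.range (⌊u / h⌋₊ + 1),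
      limsup (scaledLog a fun n => P (Y n ⁻¹' Ici (u - i * h - h) ∩ X n ⁻¹' Ici (c - (u - i * h))))
        atTop ≤ ((-(lam * c ^ 2 / 2 + G / 2) : ℝ) : EReal) := by
    intro i hi
    have hyi := sub_nat_mul_nonneg_of_mem_range_floor hu hh hi
    have hyu : u - i * h ≤ u := sub_le_self _ (by positivity)
    exact (limsup_scaledLog_Ici_inter_Ici_le hX hY hindep ha hlam hlamβ hLDPY hLDPXY _
      (by linarith)).trans (EReal.coe_le_coe_iff.2 (hcell _ ⟨hyi, hyu⟩))
  exact (limsup_le_limsup ((ha.eventually_gt_atTop 0).mono fun n han =>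
    scaledLog_mono han.le (measure_lt_and_le_add_le_le (X n) (Y n) hh))).trans
      (limsup_scaledLog_add_le ha hXc (limsup_scaledLog_sum_le ha _ hcells))

end Tails

theorem stmt10_general {Ω : Type*} [MeasurableSpace Ω] (P : Measure Ω)
    (X Y : ℕ → Ω → ℝ) (hX : ∀ n, Measurable (X n)) (hY : ∀ n, Measurable (Y n))
    (hindep : ∀ n, IndepFun (X n) (Y n) P)
    (a : ℕ → ℝ) (ha' : Tendsto a atTop atTop)
    (lam β : ℝ) (hlam : 0 < lam) (hlamβ : lam < β)
    (J K : ℝ → ℝ)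
    (hJ : J = fun x => lam * x ^ 2 / 2)
    (hK : K = fun x => β * x ^ 2 / 2)
    (hLDPY : SatisfiesLDP (fun n => P.map (Y n)) a K)
    (hLDPXY : SatisfiesLDP (fun n => P.map (fun ω => X n ω + Y n ω)) a J)
    (x : ℝ) (hx : 0 ≤ x) (ε : ℝ) (hε : 0 < ε)
    (x₀ : ℝ) (hx₀ : x₀ = β * x / (β - lam)) :
    (∀ᶠ n in atTop, 0 < P {ω | x₀ + ε ≤ X n ω + Y n ω}) ∧
    Tendsto
      (fun n =>
        P {ω | Y n ω < x₀ - x ∧ x₀ + ε ≤ X n ω + Y n ω} /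
          P {ω | x₀ + ε ≤ X n ω + Y n ω})
      atTop (nhds 0) := by
  subst hJ hK
  have hβl : 0 < β - lam := sub_pos.2 hlamβ
  have hβ : 0 < β := hlam.trans hlamβ
  have hx₀x : β * (x₀ - x) = lam * x₀ := by rw [hx₀]; field_simp; ring
  have hx₀0 : 0 ≤ x₀ := hx₀ ▸ div_nonneg (mul_nonneg hβ.le hx) hβl.le
  have hu : 0 ≤ x₀ - x := (mul_nonneg_iff_of_pos_left hβ).1 (hx₀x ▸ mul_nonneg hlam.le hx₀0)
  set G := lam ^ 2 * ε ^ 2 / (2 * (β - lam))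
  have hG : 0 < G := by positivity
  obtain ⟨h, hh, hhG⟩ := exists_pos_mul_lt hG (2 * β * (x₀ - x))
  have hgap : ∀ y ∈ Icc 0 (x₀ - x), lam * (x₀ + ε) ^ 2 / 2 + G
      ≤ β * y ^ 2 / 2 + lam * β / (β - lam) * (x₀ + ε - y) ^ 2 / 2 := fun y hy =>
    add_le_sq_add_sq_of_mul_le hlam.le hlamβ hε.le <| by
      rw [add_sub_cancel_right, ← hx₀x]
      exact mul_le_mul_of_nonneg_left hy.2 hβ.le
  have hnum := limsup_scaledLog_lt_and_le_add_le hX hY hindep ha' hlam.le hlamβ hLDPY hLDPXY hu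
    (by linarith) hh hhG.le hgap
  have hden : ((-(lam * (x₀ + ε) ^ 2 / 2) : ℝ) : EReal)
      ≤ liminf (scaledLog a fun n => P {ω | x₀ + ε ≤ X n ω + Y n ω}) atTop := by
    have h := hLDPXY.le_liminf_scaledLog_Ioi_of_sq (x₀ + ε)
    rw [scaledLog_map (Z := fun n ω => X n ω + Y n ω) (fun n => (hX n).add (hY n)) a
      measurableSet_Ioi] at h
    exact h.trans (liminf_le_liminf ((ha'.eventually_gt_atTop 0).mono fun n han =>
      scaledLog_mono han.le (measure_mono (preimage_mono Ioi_subset_Ici_self))))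
  refine ⟨eventually_pos_of_le_liminf_scaledLog ha' hden,
    tendsto_zero_of_limsup_scaledLog_neg ha' ((limsup_scaledLog_div_le ha' hnum hden).trans_lt ?_)⟩
  exact_mod_cast (by linarith : -(lam * (x₀ + ε) ^ 2 / 2 + G / 2) - -(lam * (x₀ + ε) ^ 2 / 2) < 0)

/-- Under LDPs for the laws of `Y_n` (rate `K x = βx²/2`) and of
`X_n + Y_n` (rate `J x = λx²/2`), with `X_n, Y_n` independent, `a_n → ∞` positive,
`0 < λ < β`, `x ≥ 0`, `ε > 0` and `x₀ = βx/(β−λ)`: the conditional probability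
`P(Y_n < x₀ − x and X_n + Y_n ≥ x₀ + ε) / P(X_n + Y_n ≥ x₀ + ε)` tends to `0`, the
denominator being strictly positive for all sufficiently large `n`. -/
theorem stmt10 {Ω : Type*} [MeasurableSpace Ω] (P : Measure Ω) [IsProbabilityMeasure P]
    (X Y : ℕ → Ω → ℝ) (hX : ∀ n, Measurable (X n)) (hY : ∀ n, Measurable (Y n))
    (hindep : ∀ n, IndepFun (X n) (Y n) P)
    (a : ℕ → ℝ) (ha : ∀ n, 0 < a n) (ha' : Tendsto a atTop atTop)
    (lam β : ℝ) (hlam : 0 < lam) (hlamβ : lam < β)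
    (J K : ℝ → ℝ)
    (hJ : J = fun x => lam * x ^ 2 / 2)
    (hK : K = fun x => β * x ^ 2 / 2)
    (hLDPY : SatisfiesLDP (fun n => P.map (Y n)) a K)
    (hLDPXY : SatisfiesLDP (fun n => P.map (fun ω => X n ω + Y n ω)) a J)
    (x : ℝ) (hx : 0 ≤ x) (ε : ℝ) (hε : 0 < ε)
    (x₀ : ℝ) (hx₀ : x₀ = β * x / (β - lam)) :
    (∀ᶠ n in atTop, 0 < P {ω | x₀ + ε ≤ X n ω + Y n ω}) ∧
    Tendsto
      (fun n =>
        P {ω | Y n ω < x₀ - x ∧ x₀ + ε ≤ X n ω + Y n ω} /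
          P {ω | x₀ + ε ≤ X n ω + Y n ω})
      atTop (nhds 0) :=
  stmt10_general P X Y hX hY hindep a ha' lam β hlam hlamβ J K hJ hK hLDPY hLDPXY x hx ε hε x₀ hx₀
end

section
/- Let (Ω, F, P) be a probability space, let β > 0, let k ≥ 2 be an integer, let α satisfy 1 − 1/(2k) < α < 1, and let λ > 0. Let W be a Gaussian random variable on Ω with mean 0 and variance 1/β, and let (X_n) be real-valued random variables on Ω such that X_n and W are independent for each n. Set J(x) = λx^{2k}/(2k)! and s_n = n^{1−2k(1−α)}. If the laws of X_n + W/n^{α−1/2} satisfy the LDP with speed (s_n) and rate function J, then the laws of X_n satisfy the LDP with speed (s_n) and rate function J. -/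
/-!
Since `W` is Gaussian, `P(|W / n^(α-1/2)| ≥ δ) ≤ 2 exp(-β δ² n^(2α-1) / 2)`, and for `k ≥ 2` the
speed `s_n = n^(1-2k(1-α))` is `o(n^(2α-1))`. Hence `X_n` and `X_n + W / n^(α-1/2)` are
exponentially equivalent at speed `s_n`, and exponentially equivalent sequences satisfy the same
LDP with a good rate function (Dembo–Zeitouni, Thm. 4.2.13). For the upper bound on a closed `C`
one passes to a closed `δ`-thickening of `C`, on which the infimum of `J` is still close to that
on `C` because the sublevel sets of `J` are compact; for the lower bound at `x ∈ O` one passes to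
a small ball around `x`.
-/

open MeasureTheory ProbabilityTheory Filter Set

open Real Metric
open scoped ENNReal NNReal

section ScaledLog

variable {s c : ℝ} {m : ℝ≥0∞}

lemma coe_inv_mul_log_le_iff (hs : 0 < s) :
    ((s⁻¹ : ℝ) : EReal) * ENNReal.log m ≤ c ↔ m ≤ ENNReal.ofReal (exp (c * s)) := by
  rw [EReal.coe_inv, mul_comm, ← div_eq_mul_inv, EReal.div_le_iff_le_mul (mod_cast hs)
    (EReal.coe_ne_top s), mul_comm, ← EReal.coe_mul, ← ENNReal.log_le_log_iff,
    ENNReal.log_ofReal_of_pos (exp_pos _), Real.log_exp]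

lemma le_coe_inv_mul_log_iff (hs : 0 < s) :
    (c : EReal) ≤ ((s⁻¹ : ℝ) : EReal) * ENNReal.log m ↔ ENNReal.ofReal (exp (c * s)) ≤ m := by
  rw [EReal.coe_inv, mul_comm, ← div_eq_mul_inv, EReal.le_div_iff_mul_le (mod_cast hs)
    (EReal.coe_ne_top s), ← EReal.coe_mul, ← ENNReal.log_le_log_iff,
    ENNReal.log_ofReal_of_pos (exp_pos _), Real.log_exp]

end ScaledLog

section EventualBounds

variable {s : ℕ → ℝ} {m : ℕ → ℝ≥0∞} {c : ℝ}

lemma eventually_le_exp_of_limsup_lt (hs : Tendsto s atTop atTop)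
    (h : limsup (fun n => (((s n)⁻¹ : ℝ) : EReal) * ENNReal.log (m n)) atTop < c) :
    ∀ᶠ n in atTop, m n ≤ ENNReal.ofReal (exp (c * s n)) := by
  filter_upwards [eventually_lt_of_limsup_lt h, hs.eventually_gt_atTop 0] with n hn hsn
  exact (coe_inv_mul_log_le_iff hsn).1 hn.le

lemma limsup_le_of_eventually_le_exp (hs : Tendsto s atTop atTop)
    (h : ∀ᶠ n in atTop, m n ≤ ENNReal.ofReal (exp (c * s n))) :
    limsup (fun n => (((s n)⁻¹ : ℝ) : EReal) * ENNReal.log (m n)) atTop ≤ c :=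
  limsup_le_of_le (by isBoundedDefault) <| by
    filter_upwards [h, hs.eventually_gt_atTop 0] with n hn hsn
    exact (coe_inv_mul_log_le_iff hsn).2 hn

lemma eventually_exp_le_of_lt_liminf (hs : Tendsto s atTop atTop)
    (h : c < liminf (fun n => (((s n)⁻¹ : ℝ) : EReal) * ENNReal.log (m n)) atTop) :
    ∀ᶠ n in atTop, ENNReal.ofReal (exp (c * s n)) ≤ m n := by
  filter_upwards [eventually_lt_of_lt_liminf h, hs.eventually_gt_atTop 0] with n hn hsn
  exact (le_coe_inv_mul_log_iff hsn).1 hn.le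

lemma le_liminf_of_eventually_exp_le (hs : Tendsto s atTop atTop)
    (h : ∀ᶠ n in atTop, ENNReal.ofReal (exp (c * s n)) ≤ m n) :
    c ≤ liminf (fun n => (((s n)⁻¹ : ℝ) : EReal) * ENNReal.log (m n)) atTop :=
  le_liminf_of_le (by isBoundedDefault) <| by
    filter_upwards [h, hs.eventually_gt_atTop 0] with n hn hsn
    exact (le_coe_inv_mul_log_iff hsn).2 hn

lemma eventually_exp_add_exp_le (hs : Tendsto s atTop atTop) {c' : ℝ} (hc : c < c') :
    ∀ᶠ n in atTop, ENNReal.ofReal (exp (-c' * s n)) + ENNReal.ofReal (exp (-c' * s n))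
      ≤ ENNReal.ofReal (exp (-c * s n)) := by
  filter_upwards [(hs.const_mul_atTop (sub_pos.2 hc)).eventually_ge_atTop (Real.log 2)] with n hn
  rw [← ENNReal.ofReal_add (exp_pos _).le (exp_pos _).le, ← two_mul,
    ← exp_log (two_pos : (0 : ℝ) < 2), ← exp_add]
  exact ENNReal.ofReal_le_ofReal (exp_le_exp.2 (by linarith))

end EventualBounds

lemma exists_pos_forall_mem_cthickening_lt {α : Type*} [PseudoMetricSpace α] {I : α → ℝ}
    {c : ℝ} (hI : IsCompact {x | I x ≤ c}) {C : Set α} (hC : IsClosed C)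
    (hCI : ∀ x ∈ C, c < I x) : ∃ δ > 0, ∀ y ∈ cthickening δ C, c < I y := by
  have hdisj : Disjoint {x | I x ≤ c} C :=
    Set.disjoint_left.2 fun x hxc hxC => (hCI x hxC).not_ge hxc
  obtain ⟨δ, hδ, h⟩ := hdisj.exists_cthickenings hI hC
  exact ⟨δ, hδ, fun y hy => not_le.1 fun hyc =>
    Set.disjoint_left.1 h (self_subset_cthickening _ hyc) hy⟩

lemma Continuous.isCompact_sublevel_of_tendsto_cocompact {α : Type*} [TopologicalSpace α]
    {f : α → ℝ} (hf : Continuous f) (hlim : Tendsto f (cocompact α) atTop) (c : ℝ) :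
    IsCompact {x | f x ≤ c} := by
  obtain ⟨K, hK, hKc⟩ := mem_cocompact.1 (hlim.eventually_gt_atTop c)
  exact hK.of_isClosed_subset (isClosed_le hf continuous_const) fun x hx =>
    by_contra fun hxK => (show c < f x from hKc hxK).not_ge hx

lemma measure_map_le_map_cthickening_add {Ω α : Type*} [MeasurableSpace Ω] [PseudoMetricSpace α]
    [MeasurableSpace α] [OpensMeasurableSpace α] (P : Measure Ω) {X Y : Ω → α}
    (hX : Measurable X) (hY : Measurable Y) {C : Set α} (hC : MeasurableSet C) (δ : ℝ) :
    P.map X C ≤ P.map Y (cthickening δ C) + P {ω | δ < dist (X ω) (Y ω)} := by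
  rw [Measure.map_apply hX hC, Measure.map_apply hY isClosed_cthickening.measurableSet]
  refine (measure_mono fun ω hω => ?_).trans (measure_union_le _ _)
  by_cases hd : dist (X ω) (Y ω) ≤ δ
  · exact Or.inl (mem_cthickening_of_dist_le _ (X ω) _ _ hω (dist_comm (X ω) _ ▸ hd))
  · exact Or.inr (not_le.1 hd)

/-- Equivalently, `limsup (s n)⁻¹ log P (δ < dist (X n) (Y n)) = -∞` for every `δ > 0`. -/
def ExponentiallyEquivalent {Ω : Type*} [MeasurableSpace Ω] (P : Measure Ω)
    (X Y : ℕ → Ω → ℝ) (s : ℕ → ℝ) : Prop :=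
  ∀ δ > 0, ∀ M : ℝ, ∀ᶠ n in atTop,
    P {ω | δ < dist (X n ω) (Y n ω)} ≤ ENNReal.ofReal (exp (-M * s n))

namespace ExponentiallyEquivalent

variable {Ω : Type*} [MeasurableSpace Ω] {P : Measure Ω} {X Y : ℕ → Ω → ℝ} {s : ℕ → ℝ}
  {I : ℝ → ℝ}

lemma symm (h : ExponentiallyEquivalent P X Y s) : ExponentiallyEquivalent P Y X s := by
  simpa only [ExponentiallyEquivalent, dist_comm] using h

theorem limsup_le (hE : ExponentiallyEquivalent P X Y s) (hX : ∀ n, Measurable (X n))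
    (hY : ∀ n, Measurable (Y n)) (hs : Tendsto s atTop atTop)
    (hI : ∀ c, IsCompact {x | I x ≤ c}) (hLDP : SatisfiesLDP (fun n => P.map (Y n)) s I)
    {C : Set ℝ} (hC : IsClosed C) :
    limsup (fun n => (((s n)⁻¹ : ℝ) : EReal) * ENNReal.log (P.map (X n) C)) atTop
      ≤ -(⨅ x ∈ C, (I x : EReal)) := by
  rw [EReal.le_neg, ← EReal.ge_of_forall_gt_iff_ge]
  intro c hc
  obtain ⟨c₁, hcc₁, hc₁I⟩ := EReal.exists_between_coe_real hc
  have hcc₁ : c < c₁ := mod_cast hcc₁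
  obtain ⟨δ, hδ, hthick⟩ := exists_pos_forall_mem_cthickening_lt (hI c₁) hC
    fun x hx => mod_cast hc₁I.trans_le (iInf₂_le x hx)
  obtain ⟨c₂, hcc₂, hc₂c₁⟩ := exists_between hcc₁
  have hYthick : ∀ᶠ n in atTop,
      P.map (Y n) (cthickening δ C) ≤ ENNReal.ofReal (exp (-c₂ * s n)) := by
    refine eventually_le_exp_of_limsup_lt hs ((hLDP.1 _ isClosed_cthickening).trans_lt ?_)
    calc -(⨅ y ∈ cthickening δ C, (I y : EReal)) ≤ ((-c₁ : ℝ) : EReal) := by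
          rw [EReal.coe_neg, EReal.neg_le_neg_iff]
          exact le_iInf₂ fun y hy => mod_cast (hthick y hy).le
      _ < ((-c₂ : ℝ) : EReal) := mod_cast neg_lt_neg hc₂c₁
  rw [EReal.le_neg, ← EReal.coe_neg]
  refine limsup_le_of_eventually_le_exp hs ?_
  filter_upwards [hYthick, hE δ hδ c₂, eventually_exp_add_exp_le hs hcc₂]
    with n hY_le hXY_le hsum
  calc P.map (X n) C
      ≤ P.map (Y n) (cthickening δ C) + P {ω | δ < dist (X n ω) (Y n ω)} :=
        measure_map_le_map_cthickening_add P (hX n) (hY n) hC.measurableSet δ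
    _ ≤ _ := (add_le_add hY_le hXY_le).trans hsum

theorem le_liminf (hE : ExponentiallyEquivalent P X Y s) (hX : ∀ n, Measurable (X n))
    (hY : ∀ n, Measurable (Y n)) (hs : Tendsto s atTop atTop)
    (hLDP : SatisfiesLDP (fun n => P.map (Y n)) s I) {O : Set ℝ} (hO : IsOpen O) :
    -(⨅ x ∈ O, (I x : EReal))
      ≤ liminf (fun n => (((s n)⁻¹ : ℝ) : EReal) * ENNReal.log (P.map (X n) O)) atTop := by
  rw [EReal.neg_le]
  refine le_iInf₂ fun x hx => ?_
  rw [EReal.neg_le, ← EReal.coe_neg, ← EReal.ge_of_forall_gt_iff_ge]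
  intro d hd
  have hIx : I x < -d := by linarith [(mod_cast hd : d < -I x)]
  obtain ⟨c₁, hIc₁, hc₁d⟩ := exists_between hIx
  obtain ⟨ε, hε, hball⟩ := Metric.isOpen_iff.1 hO x hx
  obtain ⟨δ, hδ, hδε⟩ : ∃ δ, 0 < δ ∧ δ + δ < ε := ⟨ε / 3, by positivity, by linarith⟩
  have hYball : ∀ᶠ n in atTop, ENNReal.ofReal (exp (-c₁ * s n)) ≤ P.map (Y n) (ball x δ) := by
    refine eventually_exp_le_of_lt_liminf hs (lt_of_lt_of_le ?_ (hLDP.2 _ isOpen_ball))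
    calc ((-c₁ : ℝ) : EReal) < -(I x : EReal) := mod_cast neg_lt_neg hIc₁
      _ ≤ -(⨅ y ∈ ball x δ, (I y : EReal)) :=
        EReal.neg_le_neg_iff.2 (iInf₂_le x (mem_ball_self hδ))
  have hthick : cthickening δ (ball x δ) ⊆ O := by
    rw [cthickening_ball hδ.le hδ]
    exact (closedBall_subset_ball hδε).trans hball
  refine le_liminf_of_eventually_exp_le hs ?_
  filter_upwards [hYball, hE.symm δ hδ (-d), eventually_exp_add_exp_le hs hc₁d]
    with n hY_ge hXY_le hsum
  rw [neg_neg] at hXY_le hsum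
  have hsplit : P.map (Y n) (ball x δ)
      ≤ P.map (X n) O + P {ω | δ < dist (Y n ω) (X n ω)} :=
    (measure_map_le_map_cthickening_add P (hY n) (hX n) isOpen_ball.measurableSet δ).trans
      (add_le_add (measure_mono hthick) le_rfl)
  exact (ENNReal.add_le_add_iff_right ENNReal.ofReal_ne_top).1
    (hsum.trans (hY_ge.trans (hsplit.trans (add_le_add le_rfl hXY_le))))

theorem satisfiesLDP (hE : ExponentiallyEquivalent P X Y s) (hX : ∀ n, Measurable (X n))
    (hY : ∀ n, Measurable (Y n)) (hs : Tendsto s atTop atTop)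
    (hI : ∀ c, IsCompact {x | I x ≤ c}) (hLDP : SatisfiesLDP (fun n => P.map (Y n)) s I) :
    SatisfiesLDP (fun n => P.map (X n)) s I :=
  ⟨fun _ hC => hE.limsup_le hX hY hs hI hLDP hC, fun _ hO => hE.le_liminf hX hY hs hLDP hO⟩

end ExponentiallyEquivalent

section SubgaussianTail

variable {Ω : Type*} [MeasurableSpace Ω] {P : Measure Ω}

lemma hasSubgaussianMGF_of_map_eq_gaussianReal {W : Ω → ℝ} {v : ℝ≥0} (hW : AEMeasurable W P)
    (hWlaw : P.map W = gaussianReal 0 v) : HasSubgaussianMGF W v P := by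
  rw [← HasSubgaussianMGF.id_map_iff hW, hWlaw]
  exact ⟨integrable_exp_mul_gaussianReal, fun t => by simp [mgf_id_gaussianReal]⟩

lemma ProbabilityTheory.HasSubgaussianMGF.measure_abs_ge_le [IsFiniteMeasure P] {X : Ω → ℝ}
    {c : ℝ≥0} (h : HasSubgaussianMGF X c P) {ε : ℝ} (hε : 0 ≤ ε) :
    P {ω | ε ≤ |X ω|} ≤ ENNReal.ofReal (2 * exp (-ε ^ 2 / (2 * c))) := by
  have hsplit : {ω | ε ≤ |X ω|} = {ω | ε ≤ X ω} ∪ {ω | ε ≤ (-X) ω} := by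
    ext ω
    exact le_abs (b := X ω)
  rw [← ofReal_measureReal, hsplit, two_mul]
  exact ENNReal.ofReal_le_ofReal ((measureReal_union_le _ _).trans
    (add_le_add (h.measure_ge_le hε) (h.neg.measure_ge_le hε)))

lemma ProbabilityTheory.HasSubgaussianMGF.eventually_measure_abs_ge_le_exp [IsFiniteMeasure P]
    {X : Ω → ℝ} {c : ℝ≥0} (h : HasSubgaussianMGF X c P) (hc : c ≠ 0) {s t : ℕ → ℝ}
    (ht : ∀ n, 0 ≤ t n) (hs : Tendsto s atTop atTop)
    (hts : Tendsto (fun n => t n ^ 2 / s n) atTop atTop) (M : ℝ) :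
    ∀ᶠ n in atTop, P {ω | t n ≤ |X ω|} ≤ ENNReal.ofReal (exp (-M * s n)) := by
  have hc_pos : (0 : ℝ) < c := NNReal.coe_pos.2 (pos_iff_ne_zero.2 hc)
  set K := max M 0 + 1
  filter_upwards [hs.eventually_ge_atTop (Real.log 2), hs.eventually_gt_atTop 0,
    hts.eventually_ge_atTop (2 * c * K)] with n hlog hpos hratio
  have htail : K * s n ≤ t n ^ 2 / (2 * c) := by
    rw [le_div_iff₀ (by positivity)]
    nlinarith [(le_div_iff₀ hpos).1 hratio]
  have hexponent : Real.log 2 - t n ^ 2 / (2 * c) ≤ -M * s n := by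
    nlinarith [mul_le_mul_of_nonneg_right (le_max_left M 0) hpos.le]
  refine (h.measure_abs_ge_le (ht n)).trans (ENNReal.ofReal_le_ofReal ?_)
  calc 2 * exp (-t n ^ 2 / (2 * c)) = exp (Real.log 2 - t n ^ 2 / (2 * c)) := by
        rw [exp_sub, exp_log two_pos, neg_div, exp_neg, ← div_eq_mul_inv]
    _ ≤ exp (-M * s n) := exp_le_exp.2 hexponent

end SubgaussianTail

lemma exponentiallyEquivalent_add_div_rpow {Ω : Type*} [MeasurableSpace Ω] {P : Measure Ω}
    [IsFiniteMeasure P] {W : Ω → ℝ} {c : ℝ≥0} (hW : HasSubgaussianMGF W c P) (hc : c ≠ 0)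
    (X : ℕ → Ω → ℝ) {a e : ℝ} (he : 0 < e) (hea : e < 2 * a) :
    ExponentiallyEquivalent P X (fun n ω => X n ω + W ω / (n : ℝ) ^ a) (fun n => (n : ℝ) ^ e) := by
  intro δ hδ M
  have hts : Tendsto (fun n : ℕ => (δ * (n : ℝ) ^ a) ^ 2 / (n : ℝ) ^ e) atTop atTop := by
    refine (((tendsto_rpow_atTop (sub_pos.2 hea)).comp tendsto_natCast_atTop_atTop).const_mul_atTop
      (pow_pos hδ 2)).congr' ?_
    filter_upwards [eventually_gt_atTop 0] with n hn
    have hn : (0 : ℝ) < n := Nat.cast_pos.2 hn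
    rw [Function.comp_apply, rpow_sub hn, mul_pow, ← rpow_mul_natCast hn.le, mul_div_assoc]
    norm_num [mul_comm a]
  filter_upwards [hW.eventually_measure_abs_ge_le_exp hc (fun n => by positivity)
    ((tendsto_rpow_atTop he).comp tendsto_natCast_atTop_atTop) hts M,
    eventually_gt_atTop 0] with n hW_le hn
  refine (measure_mono fun ω hω => ?_).trans hW_le
  have hna : (0 : ℝ) < (n : ℝ) ^ a := rpow_pos_of_pos (Nat.cast_pos.2 hn) a
  rw [mem_ofPred_eq, dist_self_add_right, Real.norm_eq_abs, abs_div, abs_of_pos hna,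
    lt_div_iff₀ hna] at hω
  exact hω.le

lemma tendsto_const_mul_pow_div_cocompact {a b : ℝ} (ha : 0 < a) (hb : 0 < b) {m : ℕ}
    (hm : Even m) (hm0 : m ≠ 0) : Tendsto (fun x : ℝ => a * x ^ m / b) (cocompact ℝ) atTop :=
  (((tendsto_pow_atTop hm0).comp tendsto_norm_cocompact_atTop).const_mul_atTop ha
    |>.atTop_div_const hb).congr fun x => by
      rw [Function.comp_apply, Real.norm_eq_abs, hm.pow_abs]

theorem stmt13_general {Ω : Type*} [MeasurableSpace Ω] (P : Measure Ω) [IsProbabilityMeasure P]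
    (β : ℝ) (hβ : 0 < β)
    (k : ℕ) (hk : 2 ≤ k) (α : ℝ) (hα₁ : 1 - 1 / (2 * (k : ℝ)) < α) (hα₂ : α < 1)
    (lam : ℝ) (hlam : 0 < lam)
    (W : Ω → ℝ) (hW : Measurable W)
    (hWlaw : P.map W = ProbabilityTheory.gaussianReal 0 (Real.toNNReal β⁻¹))
    (X : ℕ → Ω → ℝ) (hX : ∀ n, Measurable (X n))
    (J : ℝ → ℝ) (hJ : J = fun x => lam * x ^ (2 * k) / (Nat.factorial (2 * k) : ℝ))
    (s : ℕ → ℝ) (hs : s = fun n : ℕ => (n : ℝ) ^ (1 - 2 * (k : ℝ) * (1 - α)))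
    (hLDP : SatisfiesLDP
      (fun n => P.map (fun ω => X n ω + W ω / (n : ℝ) ^ (α - 1 / 2))) s J) :
    SatisfiesLDP (fun n => P.map (X n)) s J := by
  subst hJ hs
  have hk2 : (2 : ℝ) ≤ k := mod_cast hk
  have hspeed : 0 < 1 - 2 * (k : ℝ) * (1 - α) := by
    have h := (lt_div_iff₀ (by positivity : (0 : ℝ) < 2 * k)).1 (by linarith : 1 - α < 1 / (2 * k))
    linarith
  have hspeed_lt : 1 - 2 * (k : ℝ) * (1 - α) < 2 * (α - 1 / 2) := by
    nlinarith [mul_pos (sub_pos.2 hα₂) (by linarith : (0 : ℝ) < k - 1)]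
  have hv : Real.toNNReal β⁻¹ ≠ 0 := by simpa using hβ
  refine (exponentiallyEquivalent_add_div_rpow
      (hasSubgaussianMGF_of_map_eq_gaussianReal hW.aemeasurable hWlaw) hv X hspeed hspeed_lt)
    |>.satisfiesLDP hX (fun n => (hX n).add (hW.div_const _))
      ((tendsto_rpow_atTop hspeed).comp tendsto_natCast_atTop_atTop)
      ((by fun_prop : Continuous _).isCompact_sublevel_of_tendsto_cocompact
        (tendsto_const_mul_pow_div_cocompact hlam (by positivity) (even_two_mul k) (by omega)))
      hLDP

/-- Let `β > 0`, `k ≥ 2` an integer, `1 − 1/(2k) < α < 1`, `λ > 0`. Let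
`W` be Gaussian with mean `0` and variance `1/β`, independent of each `X_n`. Set
`J x = λ x^(2k)/(2k)!` and `s_n = n^(1−2k(1−α))`. If the laws of `X_n + W/n^(α−1/2)`
satisfy the LDP with speed `s_n` and rate `J`, then so do the laws of `X_n`. -/
theorem stmt13 {Ω : Type*} [MeasurableSpace Ω] (P : Measure Ω) [IsProbabilityMeasure P]
    (β : ℝ) (hβ : 0 < β)
    (k : ℕ) (hk : 2 ≤ k) (α : ℝ) (hα₁ : 1 - 1 / (2 * (k : ℝ)) < α) (hα₂ : α < 1)
    (lam : ℝ) (hlam : 0 < lam)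
    (W : Ω → ℝ) (hW : Measurable W)
    (hWlaw : P.map W = ProbabilityTheory.gaussianReal 0 (Real.toNNReal β⁻¹))
    (X : ℕ → Ω → ℝ) (hX : ∀ n, Measurable (X n))
    (hindep : ∀ n, IndepFun (X n) W P)
    (J : ℝ → ℝ) (hJ : J = fun x => lam * x ^ (2 * k) / (Nat.factorial (2 * k) : ℝ))
    (s : ℕ → ℝ) (hs : s = fun n : ℕ => (n : ℝ) ^ (1 - 2 * (k : ℝ) * (1 - α)))
    (hLDP : SatisfiesLDP
      (fun n => P.map (fun ω => X n ω + W ω / (n : ℝ) ^ (α - 1 / 2))) s J) :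
    SatisfiesLDP (fun n => P.map (X n)) s J :=
  stmt13_general P β hβ k hk α hα₁ hα₂ lam hlam W hW hWlaw X hX J hJ s hs hLDP
end

section
/- Let β > 0 and let ν be a Borel probability measure on ℝ with finite first moment (∫|h| dν(h) < ∞). Define L(z) = ∫ log cosh(β(z+h)) dν(h) and G(x) = βx²/2 − L(x). Then for every x ∈ ℝ, inf_{z∈ℝ} [ β(x−z)²/2 + sup_{w∈ℝ} ( G(w) − β(z−w)²/2 ) ] = G(x), where the inner supremum and the outer infimum are taken in the extended reals. -/
/-!
Expanding the square, `G w - β (z - w)² / 2 = β z w - β z² / 2 - L w`, so the inner supremum is a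
Legendre transform of `L`. Taking `w = x` gives `≥` for every `z`. For `≤`, `L` is convex (an
average of translates of `log ∘ cosh`, whose derivative `tanh` is increasing; integrable since
`0 ≤ log cosh t ≤ |t|`), so it has a subgradient `c` at `x`; for `z = c / β` the point `w = x`
maximises `G w - β (z - w)² / 2`, and the value there is exactly `G x - β (x - z)² / 2`.
-/

open MeasureTheory Real Set

lemma Real.monotone_tanh : Monotone tanh := fun a b hab => by
  have mem : ∀ t, tanh t ∈ Ioo (-1 : ℝ) 1 := fun t => ⟨neg_one_lt_tanh t, tanh_lt_one t⟩
  rwa [← artanh_le_artanh_iff (mem a) (mem b), artanh_tanh, artanh_tanh]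

lemma Real.hasDerivAt_log_cosh (t : ℝ) : HasDerivAt (fun s => log (cosh s)) (tanh t) t := by
  simpa only [tanh_eq_sinh_div_cosh] using (hasDerivAt_cosh t).log (cosh_pos t).ne'

lemma Real.convexOn_log_cosh : ConvexOn ℝ univ fun t => log (cosh t) := by
  refine Monotone.convexOn_univ_of_deriv (fun t => (hasDerivAt_log_cosh t).differentiableAt) ?_
  rw [funext fun t => (hasDerivAt_log_cosh t).deriv]
  exact monotone_tanh

lemma Real.log_cosh_nonneg (t : ℝ) : 0 ≤ log (cosh t) := log_nonneg (one_le_cosh t)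

lemma Real.log_cosh_le_abs (t : ℝ) : log (cosh t) ≤ |t| := by
  rw [log_le_iff_le_exp (cosh_pos t), cosh_eq]
  linarith [exp_le_exp.2 (le_abs_self t), exp_le_exp.2 (neg_le_abs t)]

lemma ConvexOn.rightDeriv_mul_sub_le {S : Set ℝ} {f : ℝ → ℝ} (hf : ConvexOn ℝ S f) {x y : ℝ}
    (hx : x ∈ interior S) (hy : y ∈ S) :
    derivWithin f (Ioi x) x * (y - x) ≤ f y - f x := by
  rcases lt_trichotomy y x with hyx | rfl | hxy
  · have hslope := (hf.slope_le_leftDeriv_of_mem_interior hy hx hyx).trans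
      (hf.leftDeriv_le_rightDeriv_of_mem_interior hx)
    rw [slope_def_field, div_le_iff₀ (sub_pos.2 hyx)] at hslope
    linarith
  · simp
  · have hslope := hf.rightDeriv_le_slope_of_mem_interior hx hy hxy
    rw [slope_def_field, le_div_iff₀ (sub_pos.2 hxy)] at hslope
    exact hslope

lemma integrable_log_cosh_mul_add {ν : Measure ℝ} [IsFiniteMeasure ν]
    (hmom : Integrable (fun h => |h|) ν) (β z : ℝ) :
    Integrable (fun h => log (cosh (β * (z + h)))) ν := by
  refine ((integrable_const (|β| * |z|)).add (hmom.const_mul |β|)).mono'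
    (Measurable.aestronglyMeasurable (by fun_prop)) (ae_of_all _ fun h => ?_)
  calc ‖log (cosh (β * (z + h)))‖ = log (cosh (β * (z + h))) :=
        Real.norm_of_nonneg (log_cosh_nonneg _)
    _ ≤ |β * (z + h)| := log_cosh_le_abs _
    _ ≤ |β| * |z| + |β| * |h| := by rw [abs_mul, ← mul_add]; gcongr; exact abs_add_le z h

lemma convexOn_integral_log_cosh_mul_add {ν : Measure ℝ} [IsFiniteMeasure ν]
    (hmom : Integrable (fun h => |h|) ν) (β : ℝ) :
    ConvexOn ℝ univ fun z => ∫ h, log (cosh (β * (z + h))) ∂ν := by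
  refine integral_convexOn_of_integrand_ae convex_univ (ae_of_all _ fun h => ?_)
    fun z _ => integrable_log_cosh_mul_add hmom β z
  have hcomp : (fun z => log (cosh (β * (z + h)))) =
      (fun t => log (cosh t)) ∘ (β • AffineMap.id ℝ ℝ + AffineMap.const ℝ ℝ (β * h)) := by
    ext z; simp [mul_add]
  simpa only [hcomp, preimage_univ] using convexOn_log_cosh.comp_affineMap _

lemma sub_sq_le_of_subgradient {β c x : ℝ} (hβ : β ≠ 0) {L : ℝ → ℝ}
    (hc : ∀ w, c * (w - x) ≤ L w - L x) (w : ℝ) :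
    (β * w ^ 2 / 2 - L w) - β * (c / β - w) ^ 2 / 2 ≤
      (β * x ^ 2 / 2 - L x) - β * (x - c / β) ^ 2 / 2 := by
  have hdiff : (β * w ^ 2 / 2 - L w) - β * (c / β - w) ^ 2 / 2 -
      ((β * x ^ 2 / 2 - L x) - β * (x - c / β) ^ 2 / 2) = c * (w - x) - (L w - L x) := by
    field_simp
    ring
  linarith [hc w]

lemma le_add_iSup_sub_sq (G : ℝ → ℝ) (β x z : ℝ) :
    ((G x : ℝ) : EReal) ≤
      ((β * (x - z) ^ 2 / 2 : ℝ) : EReal) + ⨆ w : ℝ, ((G w - β * (z - w) ^ 2 / 2 : ℝ) : EReal) :=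
  calc ((G x : ℝ) : EReal)
      = ((β * (x - z) ^ 2 / 2 : ℝ) : EReal) + ((G x - β * (z - x) ^ 2 / 2 : ℝ) : EReal) := by
        rw [← EReal.coe_add]; congr 1; ring
    _ ≤ _ := by
        gcongr
        exact le_iSup (fun w : ℝ => ((G w - β * (z - w) ^ 2 / 2 : ℝ) : EReal)) x

lemma iInf_add_iSup_sub_sq_eq {G : ℝ → ℝ} {β x z₀ : ℝ}
    (hmax : ∀ w, G w - β * (z₀ - w) ^ 2 / 2 ≤ G x - β * (x - z₀) ^ 2 / 2) :
    (⨅ z : ℝ, ((β * (x - z) ^ 2 / 2 : ℝ) : EReal) +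
      ⨆ w : ℝ, ((G w - β * (z - w) ^ 2 / 2 : ℝ) : EReal)) = ((G x : ℝ) : EReal) := by
  refine le_antisymm (iInf_le_of_le z₀ ?_) (le_iInf (le_add_iSup_sub_sq G β x))
  calc ((β * (x - z₀) ^ 2 / 2 : ℝ) : EReal) + ⨆ w : ℝ, ((G w - β * (z₀ - w) ^ 2 / 2 : ℝ) : EReal)
      ≤ ((β * (x - z₀) ^ 2 / 2 : ℝ) : EReal) + ((G x - β * (x - z₀) ^ 2 / 2 : ℝ) : EReal) := by
        gcongr
        exact iSup_le fun w => EReal.coe_le_coe (hmax w)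
    _ = ((G x : ℝ) : EReal) := by rw [← EReal.coe_add]; congr 1; ring

/-- For `β > 0` and a Borel probability measure `ν` on `ℝ` with finite
first moment, setting `L z = ∫ log cosh (β (z + h)) dν(h)` and `G x = β x²/2 − L x`,
the infimal-convolution identity
`inf_z [ β(x−z)²/2 + sup_w ( G w − β(z−w)²/2 ) ] = G x` holds for every `x ∈ ℝ`, with
the inner supremum and outer infimum taken in the extended reals `EReal`. -/
theorem stmt15 (β : ℝ) (hβ : 0 < β) (ν : Measure ℝ) [IsProbabilityMeasure ν]
    (hmom : Integrable (fun h : ℝ => |h|) ν)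
    (L G : ℝ → ℝ)
    (hL : L = fun z : ℝ => ∫ h, Real.log (Real.cosh (β * (z + h))) ∂ν)
    (hG : G = fun x : ℝ => β * x ^ 2 / 2 - L x) :
    ∀ x : ℝ,
      (⨅ z : ℝ, (((β * (x - z) ^ 2 / 2 : ℝ) : EReal) +
        ⨆ w : ℝ, ((G w - β * (z - w) ^ 2 / 2 : ℝ) : EReal))) = ((G x : ℝ) : EReal) := by
  intro x
  have hconv : ConvexOn ℝ univ L := hL ▸ convexOn_integral_log_cosh_mul_add hmom β
  have hsub : ∀ w, derivWithin L (Ioi x) x * (w - x) ≤ L w - L x := fun w =>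
    hconv.rightDeriv_mul_sub_le (by simp) (mem_univ w)
  subst hG
  exact iInf_add_iSup_sub_sq_eq (sub_sq_le_of_subgradient hβ.ne' hsub)
end
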